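/- arXiv:0706.3265 — 13 statements merged into one kernel-verified Lean document; each statement's English description precedes it below -/
import Mathlib

section
/- Let N ≥ 2, let λ_1, …, λ_{N²−1} be generator matrices for dimension N, and let r = (r_1, …, r_{N²−1}) ∈ ℝ^{N²−1} be a nonzero vector with Euclidean norm r̄ = √(Σ_{i=1}^{N²−1} r_i²). Define ρ = (1/N)·(I + √(N(N−1)/2)·Σ_{i=1}^{N²−1} r_i λ_i). Then ρ is an N-level quantum state if and only if r̄ ≤ √(2/(N(N−1))) · 1/|m(Σ_{i=1}^{N²−1} (r_i/r̄) λ_i)|, where m(A) denotes the minimum eigenvalue of the Hermitian matrix A. -/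
open Matrix BigOperators ComplexOrder

lemma psd_unitary_conj_iff {n : Type*} [Fintype n] [DecidableEq n]
    (U : Matrix.unitaryGroup n ℂ) (D : Matrix n n ℂ) :
    ((U : Matrix n n ℂ) * D * star (U : Matrix n n ℂ)).PosSemidef ↔ D.PosSemidef := by
  have h1 : star (U : Matrix n n ℂ) * (U : Matrix n n ℂ) = 1 := Unitary.coe_star_mul_self U
  constructor
  · intro h
    have := h.conjTranspose_mul_mul_same (U : Matrix n n ℂ)
    rw [← Matrix.star_eq_conjTranspose] at this
    rw [show star (U : Matrix n n ℂ) * ((U : Matrix n n ℂ) * D * star (U : Matrix n n ℂ)) *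
        (U : Matrix n n ℂ) = (star (U : Matrix n n ℂ) * (U : Matrix n n ℂ)) * D *
        (star (U : Matrix n n ℂ) * (U : Matrix n n ℂ)) by simp only [mul_assoc],
      h1, one_mul, mul_one] at this
    exact this
  · intro h
    have := h.mul_mul_conjTranspose_same (U : Matrix n n ℂ)
    rw [← Matrix.star_eq_conjTranspose] at this
    exact this

/-- Lemma 2 (Kimura–Kossakowski): ρ = (1/N)(I + √(N(N−1)/2) Σᵢ rᵢ λᵢ) is a
quantum state iff the norm of r is at most √(2/(N(N−1))) · 1/|m(Σᵢ (rᵢ/r̄) λᵢ)|,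
where m(A) is the minimum eigenvalue of the Hermitian matrix A. -/
theorem bloch_vector_state_iff (N : ℕ) (hN : 2 ≤ N)
    (lam : Fin (N ^ 2 - 1) → Matrix (Fin N) (Fin N) ℂ)
    (hherm : ∀ i, (lam i).IsHermitian)
    (htr : ∀ i, (lam i).trace = 0)
    (horth : ∀ i j, (lam i * lam j).trace = if i = j then 2 else 0)
    (r : Fin (N ^ 2 - 1) → ℝ) (hr : r ≠ 0)
    (rbar : ℝ) (hrbar : rbar = Real.sqrt (∑ i, (r i) ^ 2))
    (ρ : Matrix (Fin N) (Fin N) ℂ)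
    (hρ : ρ = (N : ℂ)⁻¹ • ((1 : Matrix (Fin N) (Fin N) ℂ) +
        (↑(Real.sqrt ((N : ℝ) * ((N : ℝ) - 1) / 2)) : ℂ) •
          ∑ i, (r i : ℂ) • lam i))
    (A : Matrix (Fin N) (Fin N) ℂ)
    (hA : A = ∑ i, ((r i / rbar : ℝ) : ℂ) • lam i)
    (hAherm : A.IsHermitian) :
    (ρ.PosSemidef ∧ ρ.trace = 1) ↔
      rbar ≤ Real.sqrt (2 / ((N : ℝ) * ((N : ℝ) - 1))) *
        (1 / |⨅ j, hAherm.eigenvalues j|) := by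
  have hNpos : (0:ℝ) < N := by positivity
  have hN1 : (0:ℝ) < (N:ℝ) - 1 := by
    have : (2:ℝ) ≤ N := by exact_mod_cast hN
    linarith
  -- rbar > 0
  have hsum_pos : 0 < ∑ i, (r i) ^ 2 := by
    have hne : ∃ i, r i ≠ 0 := by
      by_contra h
      push_neg at h
      exact hr (funext h)
    obtain ⟨i, hi⟩ := hne
    have : 0 < (r i)^2 := by positivity
    exact Finset.sum_pos' (fun j _ => sq_nonneg _) ⟨i, Finset.mem_univ i, this⟩
  have hrbar_pos : 0 < rbar := by rw [hrbar]; positivity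
  have hrbar_sq : rbar ^ 2 = ∑ i, (r i) ^ 2 := by
    rw [hrbar, Real.sq_sqrt hsum_pos.le]
  -- constants
  set c : ℝ := Real.sqrt ((N : ℝ) * ((N : ℝ) - 1) / 2) with hc
  have hcpos : 0 < c := by rw [hc]; positivity
  set t : ℝ := c * rbar with ht
  have htpos : 0 < t := mul_pos hcpos hrbar_pos
  -- rewrite sum as rbar • A
  have hsum : (∑ i, (r i : ℂ) • lam i) = (rbar : ℂ) • A := by
    rw [hA, Finset.smul_sum]
    refine Finset.sum_congr rfl fun i _ => ?_
    rw [smul_smul]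
    congr 1
    push_cast
    field_simp
  have hρ' : ρ = (N : ℂ)⁻¹ • ((1 : Matrix (Fin N) (Fin N) ℂ) + (t : ℂ) • A) := by
    rw [hρ, hsum, smul_smul, ht]
    push_cast
    ring_nf
  -- trace A = 0
  have htrA : A.trace = 0 := by
    rw [hA, Matrix.trace_sum]
    simp [Matrix.trace_smul, htr]
  -- trace ρ = 1
  have htrρ : ρ.trace = 1 := by
    rw [hρ', Matrix.trace_smul, Matrix.trace_add, Matrix.trace_smul, htrA,
      Matrix.trace_one]
    simp
    rw [inv_mul_cancel₀]
    exact_mod_cast hNpos.ne'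
  -- trace (A * A) = 2
  have hreal1 : ∑ i, (r i / rbar)^2 = 1 := by
    simp_rw [div_pow, ← Finset.sum_div, ← hrbar_sq]
    exact div_self (by positivity)
  have htrAA : (A * A).trace = 2 := by
    rw [hA, Finset.sum_mul_sum]
    simp only [Matrix.smul_mul, Matrix.mul_smul, Matrix.trace_sum, Matrix.trace_smul,
      horth, smul_eq_mul, mul_ite, mul_zero]
    simp only [Finset.sum_ite_eq, Finset.mem_univ, if_true]
    have h2 : ∀ x : Fin (N^2-1), ((r x / rbar : ℝ):ℂ) * (((r x / rbar : ℝ):ℂ) * 2) =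
        (((r x / rbar)^2 * 2 : ℝ):ℂ) := by
      intro x; push_cast; ring
    simp_rw [h2, ← Complex.ofReal_sum, ← Finset.sum_mul, hreal1]
    norm_num
  -- spectral theorem
  set μ : Fin N → ℝ := hAherm.eigenvalues with hμ
  set U := hAherm.eigenvectorUnitary with hU
  set D : Matrix (Fin N) (Fin N) ℂ := Matrix.diagonal (RCLike.ofReal ∘ μ) with hD
  have hspec : A = (U : Matrix (Fin N) (Fin N) ℂ) * D * star (U : Matrix (Fin N) (Fin N) ℂ) :=
    hAherm.spectral_theorem
  have hUstar : star (U : Matrix (Fin N) (Fin N) ℂ) * (U : Matrix (Fin N) (Fin N) ℂ) = 1 :=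
    Unitary.coe_star_mul_self U
  have hUstar' : (U : Matrix (Fin N) (Fin N) ℂ) * star (U : Matrix (Fin N) (Fin N) ℂ) = 1 :=
    Unitary.coe_mul_star_self U
  -- sum of eigenvalues = 0
  have hsum_eig : ∑ j, μ j = 0 := by
    have h1 : A.trace = ∑ j, (μ j : ℂ) := by
      rw [hspec, Matrix.trace_mul_cycle, hUstar, one_mul, hD, Matrix.trace_diagonal]
      simp [RCLike.ofReal]
    rw [htrA] at h1
    exact_mod_cast h1.symm
  -- sum of squares of eigenvalues = 2
  have hsq_eig : ∑ j, (μ j)^2 = 2 := by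
    have h1 : (A * A).trace = ∑ j, ((μ j : ℂ))^2 := by
      conv_lhs => rw [hspec]
      rw [show ((U : Matrix (Fin N) (Fin N) ℂ) * D * star (U : Matrix (Fin N) (Fin N) ℂ)) *
          ((U : Matrix (Fin N) (Fin N) ℂ) * D * star (U : Matrix (Fin N) (Fin N) ℂ)) =
          (U : Matrix (Fin N) (Fin N) ℂ) * (D * (star (U : Matrix (Fin N) (Fin N) ℂ) *
          (U : Matrix (Fin N) (Fin N) ℂ)) * D) * star (U : Matrix (Fin N) (Fin N) ℂ) by
        simp only [mul_assoc], hUstar, mul_one,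
        Matrix.trace_mul_cycle, hUstar, one_mul, hD, Matrix.diagonal_mul_diagonal,
        Matrix.trace_diagonal]
      simp [RCLike.ofReal, sq]
    rw [htrAA] at h1
    exact_mod_cast h1.symm
  -- minimum eigenvalue attained and negative
  have hne : Nonempty (Fin N) := ⟨⟨0, by omega⟩⟩
  obtain ⟨j0, hj0⟩ := Finite.exists_min μ
  have hm_eq : (⨅ j, μ j) = μ j0 :=
    le_antisymm (ciInf_le (Finite.bddBelow_range μ) j0) (le_ciInf hj0)
  have hm_neg : μ j0 < 0 := by
    by_contra h
    push_neg at h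
    have hall : ∀ j ∈ Finset.univ, 0 ≤ μ j := fun j _ => le_trans h (hj0 j)
    have hzero : ∀ j ∈ Finset.univ, μ j = 0 :=
      (Finset.sum_eq_zero_iff_of_nonneg hall).mp hsum_eig
    have : ∑ j, (μ j)^2 = 0 := Finset.sum_eq_zero fun j hj => by rw [hzero j hj]; ring
    rw [hsq_eig] at this
    norm_num at this
  -- ρ as conjugated diagonal
  have hdiag : (N : ℂ)⁻¹ • ((1 : Matrix (Fin N) (Fin N) ℂ) + (t : ℂ) • D) =
      Matrix.diagonal (fun j => (((N:ℝ)⁻¹ * (1 + t * μ j) : ℝ) : ℂ)) := by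
    ext i j
    by_cases h : i = j
    · subst h
      simp only [Matrix.smul_apply, Matrix.add_apply, Matrix.one_apply_eq, hD,
        Matrix.diagonal_apply_eq, Function.comp_apply, smul_eq_mul]
      push_cast
      ring_nf
      norm_cast
    · simp [hD, Matrix.diagonal_apply_ne _ h, Matrix.one_apply_ne h]
  have hρ'' : ρ = (U : Matrix (Fin N) (Fin N) ℂ) *
      Matrix.diagonal (fun j => (((N:ℝ)⁻¹ * (1 + t * μ j) : ℝ) : ℂ)) *
      star (U : Matrix (Fin N) (Fin N) ℂ) := by
    have h1 : (1 : Matrix (Fin N) (Fin N) ℂ) + (t : ℂ) • A =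
        (U : Matrix (Fin N) (Fin N) ℂ) * ((1 : Matrix (Fin N) (Fin N) ℂ) + (t : ℂ) • D) *
        star (U : Matrix (Fin N) (Fin N) ℂ) := by
      rw [Matrix.mul_add, Matrix.add_mul, Matrix.mul_one, hUstar', Matrix.mul_smul,
        Matrix.smul_mul, ← hspec]
    rw [hρ', h1, ← Matrix.smul_mul, ← Matrix.mul_smul, hdiag]
  -- PosSemidef characterization
  have hpsd : ρ.PosSemidef ↔ ∀ j, 0 ≤ 1 + t * μ j := by
    rw [hρ'', psd_unitary_conj_iff, Matrix.posSemidef_diagonal_iff]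
    constructor
    · intro h j
      have := h j
      rw [Complex.zero_le_real] at this
      have hNinv : (0:ℝ) < ((N:ℝ))⁻¹ := by positivity
      nlinarith [this, hNinv]
    · intro h j
      rw [Complex.zero_le_real]
      have := h j
      positivity
  -- reduce to min eigenvalue
  have hpsd' : ρ.PosSemidef ↔ 0 ≤ 1 + t * μ j0 := by
    rw [hpsd]
    constructor
    · exact fun h => h j0
    · intro h j
      nlinarith [hj0 j, htpos.le]
  -- final arithmetic
  have hcinv : Real.sqrt (2 / ((N : ℝ) * ((N : ℝ) - 1))) = c⁻¹ := by
    rw [hc, ← Real.sqrt_inv]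
    congr 1
    field_simp
  have habs : |⨅ j, μ j| = -(μ j0) := by
    rw [hm_eq, abs_of_neg hm_neg]
  rw [hpsd', hcinv, habs]
  have hmpos : 0 < -(μ j0) := by linarith
  have hrhs : c⁻¹ * (1 / -(μ j0)) = 1 / (c * -(μ j0)) := by
    field_simp
  rw [hrhs, le_div_iff₀ (mul_pos hcpos hmpos)]
  have hkey : rbar * (c * -(μ j0)) = -(t * μ j0) := by rw [ht]; ring
  constructor
  · rintro ⟨h1, -⟩
    linarith [hkey]
  · intro h
    exact ⟨by linarith [hkey], htrρ⟩
end

section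
/- Let N ≥ 2, let λ_1, …, λ_{N²−1} be generator matrices for dimension N, and let r = (r_1, …, r_{N²−1}) ∈ ℝ^{N²−1} satisfy √(Σ_{i=1}^{N²−1} r_i²) ≤ 1/(N−1). Then the matrix ρ = (1/N)·(I + √(N(N−1)/2)·Σ_{i=1}^{N²−1} r_i λ_i) is an N-level quantum state (i.e., positive semidefinite with trace 1). In other words, the closed ball of radius 1/(N−1) in ℝ^{N²−1} is contained in the set of Bloch vectors of N-level quantum states. -/
open Matrix BigOperators ComplexOrder

lemma aux_smul_psd {n : ℕ} (M : Matrix (Fin n) (Fin n) ℂ) (hM : M.PosSemidef)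
    (c : ℝ) (hc : 0 ≤ c) : ((c : ℂ) • M).PosSemidef := by
  refine ⟨?_, ?_⟩
  · have := hM.1
    unfold Matrix.IsHermitian at this ⊢
    rw [conjTranspose_smul, this]
    congr 1
    simp [Complex.star_def, Complex.conj_ofReal]
  · intro x
    exact (hM.smul (Complex.zero_le_real.mpr hc)).2 x

/-- Lemma 3, first inclusion (small ball): if |r| ≤ 1/(N−1) then
ρ = (1/N)(I + √(N(N−1)/2) Σᵢ rᵢ λᵢ) is an N-level quantum state. -/
theorem small_ball_subset_bloch (N : ℕ) (hN : 2 ≤ N)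
    (lam : Fin (N ^ 2 - 1) → Matrix (Fin N) (Fin N) ℂ)
    (hherm : ∀ i, (lam i).IsHermitian)
    (htr : ∀ i, (lam i).trace = 0)
    (horth : ∀ i j, (lam i * lam j).trace = if i = j then 2 else 0)
    (r : Fin (N ^ 2 - 1) → ℝ)
    (hrnorm : Real.sqrt (∑ i, (r i) ^ 2) ≤ 1 / ((N : ℝ) - 1))
    (ρ : Matrix (Fin N) (Fin N) ℂ)
    (hρ : ρ = (N : ℂ)⁻¹ • ((1 : Matrix (Fin N) (Fin N) ℂ) +
        (↑(Real.sqrt ((N : ℝ) * ((N : ℝ) - 1) / 2)) : ℂ) •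
          ∑ i, (r i : ℂ) • lam i)) :
    ρ.PosSemidef ∧ ρ.trace = 1 := by
  have hN2 : (2 : ℝ) ≤ (N : ℝ) := by exact_mod_cast hN
  set m : ℝ := (N : ℝ) - 1 with hm
  have hm1 : (1 : ℝ) ≤ m := by simp [hm]; linarith
  have hm0 : (0 : ℝ) < m := by linarith
  set c : ℝ := Real.sqrt ((N : ℝ) * ((N : ℝ) - 1) / 2) with hc
  set S : Matrix (Fin N) (Fin N) ℂ := ∑ i, (r i : ℂ) • lam i with hS
  set A : Matrix (Fin N) (Fin N) ℂ := (c : ℂ) • S with hA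
  have hρ' : ρ = (N : ℂ)⁻¹ • ((1 : Matrix (Fin N) (Fin N) ℂ) + A) := hρ
  -- r bound squared
  have hrs0 : (0 : ℝ) ≤ ∑ i, (r i) ^ 2 := Finset.sum_nonneg fun i _ => sq_nonneg _
  have hr2 : ∑ i, (r i) ^ 2 ≤ (1 / m) ^ 2 := by
    have h := pow_le_pow_left₀ (Real.sqrt_nonneg _) hrnorm 2
    rwa [Real.sq_sqrt hrs0] at h
  -- trace of S and A
  have htrS : S.trace = 0 := by
    simp [hS, trace_sum, trace_smul, htr]
  have htrA : A.trace = 0 := by simp [hA, trace_smul, htrS]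
  -- Hermitian
  have hSh : S.IsHermitian := by
    unfold Matrix.IsHermitian
    rw [hS, conjTranspose_sum]
    refine Finset.sum_congr rfl fun i _ => ?_
    rw [conjTranspose_smul, (hherm i).eq]
    congr 1
    simp [Complex.star_def, Complex.conj_ofReal]
  have hAh : A.IsHermitian := by
    unfold Matrix.IsHermitian
    rw [hA, conjTranspose_smul, hSh.eq]
    congr 1
    simp [Complex.star_def, Complex.conj_ofReal]
  -- trace of A * A
  have hc2 : c ^ 2 = (N : ℝ) * ((N : ℝ) - 1) / 2 := Real.sq_sqrt (by nlinarith)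
  have htrSS : (S * S).trace = ((2 * ∑ i, (r i) ^ 2 : ℝ) : ℂ) := by
    rw [hS, Finset.sum_mul_sum]
    rw [trace_sum]
    have : ∀ i : Fin (N ^ 2 - 1),
        (∑ j, ((r i : ℂ) • lam i) * ((r j : ℂ) • lam j)).trace
          = (r i : ℂ) * (r i : ℂ) * 2 := by
      intro i
      rw [trace_sum]
      have : ∀ j, (((r i : ℂ) • lam i) * ((r j : ℂ) • lam j)).trace
          = (r i : ℂ) * (r j : ℂ) * (if i = j then 2 else 0) := by
        intro j
        rw [Matrix.smul_mul, Matrix.mul_smul, smul_smul, trace_smul, horth, smul_eq_mul]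
      simp only [this]
      simp [Finset.sum_ite_eq', mul_ite, mul_zero]
    simp only [this]
    push_cast
    rw [Finset.mul_sum]
    refine Finset.sum_congr rfl fun i _ => ?_
    ring
  have htrAA : (A * A).trace = (((N : ℝ) * m * ∑ i, (r i) ^ 2 : ℝ) : ℂ) := by
    rw [hA, Matrix.smul_mul, Matrix.mul_smul, smul_smul, trace_smul, htrSS, smul_eq_mul]
    have hcc : ((c : ℂ) * (c : ℂ)) = (((N : ℝ) * ((N : ℝ) - 1) / 2 : ℝ) : ℂ) := by
      rw [← hc2]; push_cast; ring
    rw [hcc, ← Complex.ofReal_mul]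
    congr 1
    rw [hm]; ring
  -- spectral theorem
  set U : Matrix (Fin N) (Fin N) ℂ := (hAh.eigenvectorUnitary : Matrix (Fin N) (Fin N) ℂ) with hU
  set μ : Fin N → ℝ := hAh.eigenvalues with hμ
  have hspec : A = U * diagonal (RCLike.ofReal ∘ μ) * star U := hAh.spectral_theorem
  have hUU : star U * U = 1 := Matrix.mem_unitaryGroup_iff'.mp hAh.eigenvectorUnitary.2
  have hU1 : U * star U = 1 := Matrix.mem_unitaryGroup_iff.mp hAh.eigenvectorUnitary.2
  have hDtr : ∀ d : Fin N → ℂ, (U * diagonal d * star U).trace = ∑ i, d i := by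
    intro d
    rw [trace_mul_cycle, hUU, one_mul, trace_diagonal]
  -- sum of eigenvalues is 0
  have hμsum : ∑ i, μ i = 0 := by
    have h1 : A.trace = ∑ i, (RCLike.ofReal (μ i) : ℂ) := by
      rw [hspec] at htrA ⊢
      exact hDtr _
    rw [htrA] at h1
    have h2 : ((∑ i, μ i : ℝ) : ℂ) = 0 := by
      push_cast
      exact h1.symm
    exact_mod_cast h2
  -- sum of squared eigenvalues
  set T : ℝ := ∑ i, (μ i) ^ 2 with hT
  have hμsq : T = (N : ℝ) * m * ∑ i, (r i) ^ 2 := by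
    have hAA : A * A = U * diagonal (fun i => (RCLike.ofReal (μ i) : ℂ) * RCLike.ofReal (μ i)) * star U := by
      conv_lhs => rw [hspec]
      simp only [mul_assoc]
      rw [← mul_assoc (star U) U, hUU, one_mul, ← diagonal_mul_diagonal]
      simp only [mul_assoc]
      rfl
    have h1 : (A * A).trace = ∑ i, (RCLike.ofReal (μ i) : ℂ) * RCLike.ofReal (μ i) := by
      rw [hAA]; exact hDtr _
    rw [htrAA] at h1
    have h2 : (((N : ℝ) * m * ∑ i, (r i) ^ 2 : ℝ) : ℂ) = ((T : ℝ) : ℂ) := by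
      rw [h1, hT]
      push_cast
      refine Finset.sum_congr rfl fun i _ => ?_
      rw [sq]
      rfl
    exact_mod_cast h2.symm
  -- T bound
  have hTbound : T ≤ (N : ℝ) / m := by
    rw [hμsq]
    calc (N : ℝ) * m * ∑ i, (r i) ^ 2 ≤ (N : ℝ) * m * (1 / m) ^ 2 := by
          apply mul_le_mul_of_nonneg_left hr2 (by positivity)
      _ = (N : ℝ) / m := by field_simp
  -- each eigenvalue is ≥ -1
  have heig : ∀ k, -1 ≤ μ k := by
    intro k
    have herase : μ k + ∑ j ∈ Finset.univ.erase k, μ j = 0 := by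
      rw [Finset.add_sum_erase _ μ (Finset.mem_univ k), hμsum]
    have herase2 : μ k ^ 2 + ∑ j ∈ Finset.univ.erase k, (μ j) ^ 2 = T := by
      rw [hT]
      exact Finset.add_sum_erase _ (fun j => μ j ^ 2) (Finset.mem_univ k)
    have hcs : (∑ j ∈ Finset.univ.erase k, μ j) ^ 2
        ≤ ((Finset.univ.erase k).card : ℝ) * ∑ j ∈ Finset.univ.erase k, (μ j) ^ 2 :=
      sq_sum_le_card_mul_sum_sq
    have hcard : ((Finset.univ.erase k).card : ℝ) = m := by
      rw [Finset.card_erase_of_mem (Finset.mem_univ k)]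
      simp [hm]
      rw [Nat.cast_sub (by omega)]
      simp
    rw [hcard] at hcs
    have hsum_eq : ∑ j ∈ Finset.univ.erase k, μ j = -μ k := by linarith
    rw [hsum_eq, neg_sq] at hcs
    have hmT : T * m ≤ (N : ℝ) := (le_div_iff₀ hm0).mp hTbound
    have hNm : (N : ℝ) = m + 1 := by rw [hm]; ring
    have hsq1 : μ k ^ 2 ≤ 1 := by nlinarith [hcs, hmT, hNm, herase2, hm0]
    nlinarith [sq_nonneg (μ k + 1)]
  -- 1 + A is PSD
  have hpsd1A : ((1 : Matrix (Fin N) (Fin N) ℂ) + A).PosSemidef := by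
    have h1A : (1 : Matrix (Fin N) (Fin N) ℂ) + A
        = U * diagonal (fun i => ((1 + μ i : ℝ) : ℂ)) * star U := by
      have : (1 : Matrix (Fin N) (Fin N) ℂ) + diagonal (RCLike.ofReal ∘ μ)
          = diagonal (fun i : Fin N => ((1 + μ i : ℝ) : ℂ)) := by
        rw [← diagonal_one, diagonal_add]
        congr 1
        funext i
        push_cast
        rfl
      rw [← this, mul_add, add_mul, mul_one, hU1, ← hspec]
    rw [h1A, Matrix.star_eq_conjTranspose]
    refine Matrix.PosSemidef.mul_mul_conjTranspose_same ?_ U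
    refine Matrix.PosSemidef.diagonal fun i => ?_
    show (0 : ℂ) ≤ ((1 + μ i : ℝ) : ℂ)
    rw [Complex.zero_le_real]
    linarith [heig i]
  -- conclude
  constructor
  · rw [hρ']
    have : ((N : ℂ))⁻¹ = (((N : ℝ)⁻¹ : ℝ) : ℂ) := by push_cast; ring
    rw [this]
    exact aux_smul_psd _ hpsd1A _ (by positivity)
  · rw [hρ', trace_smul, trace_add, trace_one, htrA, smul_eq_mul]
    have hNne : (N : ℂ) ≠ 0 := by
      simp only [ne_eq, Nat.cast_eq_zero]
      omega
    field_simp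
    simp
end

section
/- Let N ≥ 2 and k ≤ N²−1, let λ_1, …, λ_k be N×N complex matrices that are Hermitian, traceless, and satisfy Tr(λ_i λ_j) = 2δ_{ij}, and let r = (r_1, …, r_k) ∈ ℝ^k be nonzero with Euclidean norm |r| = √(Σ_{i=1}^k r_i²). Then the matrix ρ(r) = (1/N)·(I + √(N(N−1)/2)·Σ_{i=1}^k (r_i/(|r|(N−1)))·λ_i) is an N-level quantum state (positive semidefinite with trace 1). -/
open Matrix BigOperators ComplexOrder

private lemma trace_conj_unitary {n : Type*} [Fintype n] [DecidableEq n]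
    (U : Matrix.unitaryGroup n ℂ) (D : Matrix n n ℂ) :
    ((U : Matrix n n ℂ) * D * star (U : Matrix n n ℂ)).trace = D.trace := by
  rw [Matrix.trace_mul_cycle, Matrix.mem_unitaryGroup_iff'.mp U.2, Matrix.one_mul]

/-- Lemma 6 (1): for any nonzero r ∈ ℝ^k with k ≤ N²−1, the matrix
ρ(r) = (1/N)(I + √(N(N−1)/2) Σᵢ (rᵢ/(|r|(N−1))) λᵢ) is an N-level quantum
state. -/
theorem embed_states (N k : ℕ) (hN : 2 ≤ N) (hk : k ≤ N ^ 2 - 1)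
    (lam : Fin k → Matrix (Fin N) (Fin N) ℂ)
    (hherm : ∀ i, (lam i).IsHermitian)
    (htr : ∀ i, (lam i).trace = 0)
    (horth : ∀ i j, (lam i * lam j).trace = if i = j then 2 else 0)
    (r : Fin k → ℝ) (hr : r ≠ 0)
    (ρ : Matrix (Fin N) (Fin N) ℂ)
    (hρ : ρ = (N : ℂ)⁻¹ • ((1 : Matrix (Fin N) (Fin N) ℂ) +
        (↑(Real.sqrt ((N : ℝ) * ((N : ℝ) - 1) / 2)) : ℂ) •
          ∑ i, ((r i / (Real.sqrt (∑ j, (r j) ^ 2) * ((N : ℝ) - 1)) : ℝ) : ℂ) • lam i)) :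
    ρ.PosSemidef ∧ ρ.trace = 1 := by
  subst hρ
  have hN2 : (2 : ℝ) ≤ (N : ℝ) := by exact_mod_cast hN
  have hN0 : (0 : ℝ) < (N : ℝ) := by linarith
  have hN1 : (0 : ℝ) < (N : ℝ) - 1 := by linarith
  have hN1' : ((N : ℝ) - 1) ≠ 0 := ne_of_gt hN1
  set s : ℝ := Real.sqrt (∑ j, (r j) ^ 2) with hs_def
  obtain ⟨i0, hi0⟩ := Function.ne_iff.mp hr
  have hsum_pos : 0 < ∑ j, (r j) ^ 2 :=
    Finset.sum_pos' (fun j _ => sq_nonneg _)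
      ⟨i0, Finset.mem_univ _, lt_of_le_of_ne (sq_nonneg _) (Ne.symm (pow_ne_zero 2 hi0))⟩
  have hs_pos : 0 < s := Real.sqrt_pos.mpr hsum_pos
  have hs_sq : s ^ 2 = ∑ j, (r j) ^ 2 := Real.sq_sqrt hsum_pos.le
  set c : ℝ := Real.sqrt ((N : ℝ) * ((N : ℝ) - 1) / 2) with hc_def
  have hc_sq : c ^ 2 = (N : ℝ) * ((N : ℝ) - 1) / 2 := Real.sq_sqrt (by positivity)
  set B : Matrix (Fin N) (Fin N) ℂ :=
    ∑ i, ((r i / (s * ((N : ℝ) - 1)) : ℝ) : ℂ) • lam i with hB_def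
  set A : Matrix (Fin N) (Fin N) ℂ := (c : ℂ) • B with hA_def
  have hB : B.IsHermitian := by
    show Bᴴ = B
    rw [hB_def, Matrix.conjTranspose_sum]
    refine Finset.sum_congr rfl fun i _ => ?_
    rw [Matrix.conjTranspose_smul, Complex.star_def, Complex.conj_ofReal, (hherm i).eq]
  have hA : A.IsHermitian := by
    show Aᴴ = A
    rw [hA_def, Matrix.conjTranspose_smul, Complex.star_def, Complex.conj_ofReal, hB.eq]
  have htrB : B.trace = 0 := by
    rw [hB_def, Matrix.trace_sum]
    simp [Matrix.trace_smul, htr]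
  have htrA : A.trace = 0 := by
    rw [hA_def, Matrix.trace_smul, htrB, smul_zero]
  have hsum_a : ∑ i, (r i / (s * ((N : ℝ) - 1))) ^ 2 = 1 / ((N : ℝ) - 1) ^ 2 := by
    simp_rw [div_pow, ← Finset.sum_div, mul_pow]
    rw [← hs_sq]
    field_simp
  have htrBB : (B * B).trace = ((2 / ((N : ℝ) - 1) ^ 2 : ℝ) : ℂ) := by
    rw [hB_def, Finset.sum_mul_sum, Matrix.trace_sum]
    simp only [smul_mul_smul_comm, Matrix.trace_sum, Matrix.trace_smul, horth, smul_eq_mul,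
      mul_ite, mul_zero, Finset.sum_ite_eq, Finset.sum_ite_eq', Finset.mem_univ, if_true]
    have hre : ∑ i, (r i / (s * ((N : ℝ) - 1))) * (r i / (s * ((N : ℝ) - 1))) * 2
        = 2 / ((N : ℝ) - 1) ^ 2 := by
      rw [← Finset.sum_mul]
      simp_rw [← sq]
      rw [hsum_a]; ring
    exact_mod_cast hre
  have htrAA : (A * A).trace = (((N : ℝ) / ((N : ℝ) - 1) : ℝ) : ℂ) := by
    rw [hA_def, smul_mul_smul_comm, Matrix.trace_smul, htrBB, smul_eq_mul]
    rw [← Complex.ofReal_mul, ← Complex.ofReal_mul]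
    congr 1
    have hcc : c * c = (N : ℝ) * ((N : ℝ) - 1) / 2 := by rw [← sq]; exact hc_sq
    rw [hcc]
    field_simp
  set μ : Fin N → ℝ := hA.eigenvalues with hμ_def
  set U := hA.eigenvectorUnitary with hU_def
  have hspec := hA.spectral_theorem
  set D : Matrix (Fin N) (Fin N) ℂ := Matrix.diagonal (RCLike.ofReal ∘ μ) with hD_def
  replace hspec : A = (U : Matrix (Fin N) (Fin N) ℂ) * D * star (U : Matrix (Fin N) (Fin N) ℂ) := by
    rw [hspec, Unitary.conjStarAlgAut_apply]
  have hUU' : ∀ X : Matrix (Fin N) (Fin N) ℂ,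
      star (U : Matrix (Fin N) (Fin N) ℂ) * ((U : Matrix (Fin N) (Fin N) ℂ) * X) = X := by
    intro X
    rw [← Matrix.mul_assoc, Matrix.mem_unitaryGroup_iff'.mp U.2, Matrix.one_mul]
  have h1 : ∑ i, μ i = 0 := by
    have h : A.trace = ∑ i, ((μ i : ℝ) : ℂ) := by
      conv_lhs => rw [hspec]
      rw [trace_conj_unitary U]
      simp [Matrix.trace_diagonal, hD_def]
    rw [htrA] at h
    exact_mod_cast h.symm
  have h2 : ∑ i, μ i ^ 2 = (N : ℝ) / ((N : ℝ) - 1) := by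
    have hAA : A * A = (U : Matrix (Fin N) (Fin N) ℂ) * (D * D) *
        star (U : Matrix (Fin N) (Fin N) ℂ) := by
      conv_lhs => rw [hspec]
      simp only [Matrix.mul_assoc]
      rw [hUU']
    have h : (A * A).trace = ∑ i, ((μ i : ℝ) : ℂ) ^ 2 := by
      rw [hAA, trace_conj_unitary U, hD_def, Matrix.diagonal_mul_diagonal,
        Matrix.trace_diagonal]
      simp [sq]
    rw [htrAA] at h
    push_cast at h
    exact_mod_cast h.symm
  have hbound : ∀ j, -1 ≤ μ j := by
    intro j
    have hch := sq_sum_le_card_mul_sum_sq (s := Finset.univ.erase j) (f := μ)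
    have hcard : ((Finset.univ.erase j).card : ℝ) = (N : ℝ) - 1 := by
      rw [Finset.card_erase_of_mem (Finset.mem_univ j), Finset.card_univ, Fintype.card_fin,
        Nat.cast_sub (by omega), Nat.cast_one]
    have he1 : ∑ i ∈ Finset.univ.erase j, μ i = -μ j := by
      rw [Finset.sum_erase_eq_sub (Finset.mem_univ j), h1]; ring
    have he2 : ∑ i ∈ Finset.univ.erase j, μ i ^ 2 = (N : ℝ) / ((N : ℝ) - 1) - μ j ^ 2 := by
      rw [Finset.sum_erase_eq_sub (Finset.mem_univ j), h2]
    rw [he1, he2, hcard] at hch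
    have hexp : ((N : ℝ) - 1) * ((N : ℝ) / ((N : ℝ) - 1) - μ j ^ 2)
        = (N : ℝ) - ((N : ℝ) - 1) * μ j ^ 2 := by
      field_simp
    rw [hexp] at hch
    have hsq : μ j ^ 2 ≤ 1 := by nlinarith
    nlinarith
  have hU2 : (U : Matrix (Fin N) (Fin N) ℂ) * star (U : Matrix (Fin N) (Fin N) ℂ) = 1 :=
    Matrix.mem_unitaryGroup_iff.mp U.2
  set D' : Fin N → ℂ := fun i => (((N : ℝ)⁻¹ * (1 + μ i) : ℝ) : ℂ) with hD'_def
  have hmid : (N : ℂ)⁻¹ • ((1 : Matrix (Fin N) (Fin N) ℂ) + D) = Matrix.diagonal D' := by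
    ext i j
    by_cases h : i = j
    · subst h
      simp [hD_def, hD'_def, Matrix.one_apply, Matrix.diagonal]
      try push_cast
      try ring
    · simp [hD_def, hD'_def, Matrix.one_apply, Matrix.diagonal, h]
  have hdiag : (N : ℂ)⁻¹ • ((1 : Matrix (Fin N) (Fin N) ℂ) + A)
      = (U : Matrix (Fin N) (Fin N) ℂ) * Matrix.diagonal D' *
        star (U : Matrix (Fin N) (Fin N) ℂ) := by
    conv_lhs => rw [hspec]
    conv_lhs =>
      rw [show (1 : Matrix (Fin N) (Fin N) ℂ)
          = (U : Matrix (Fin N) (Fin N) ℂ) * 1 * star (U : Matrix (Fin N) (Fin N) ℂ) by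
        rw [Matrix.mul_one, hU2]]
    rw [← Matrix.add_mul, ← Matrix.mul_add, ← smul_mul_assoc, ← mul_smul_comm, hmid]
  constructor
  · rw [hdiag]
    have hd : (Matrix.diagonal D').PosSemidef := by
      refine Matrix.posSemidef_diagonal_iff.mpr fun i => ?_
      have h0 : (0:ℝ) ≤ (N : ℝ)⁻¹ * (1 + μ i) :=
        mul_nonneg (inv_nonneg.mpr hN0.le) (by linarith [hbound i])
      simp only [hD'_def]
      exact_mod_cast h0
    have := hd.mul_mul_conjTranspose_same (U : Matrix (Fin N) (Fin N) ℂ)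
    simpa [Matrix.star_eq_conjTranspose] using this
  · rw [Matrix.trace_smul, Matrix.trace_add, Matrix.trace_one, htrA, add_zero]
    simp only [smul_eq_mul, Fintype.card_fin]
    have : ((N : ℂ)) ≠ 0 := Nat.cast_ne_zero.mpr (by omega)
    field_simp
end

section
/- Let h = (h_1, …, h_k, h_{k+1}) ∈ ℝ^{k+1}, let N ≥ 2 satisfy N² ≥ k+1, let λ_1, …, λ_k be N×N complex matrices that are Hermitian, traceless, and satisfy Tr(λ_i λ_j) = 2δ_{ij}, and set h̄ = √(Σ_{i=1}^k h_i²). Let α and β be two positive real numbers, each at most 1/(2(|h_{k+1}| + h̄·√(2(N−1)/N))). Then the matrices E_0 = (1/2 − α·h_{k+1})·I + β·Σ_{i=1}^k h_i λ_i and E_1 = (1/2 + α·h_{k+1})·I − β·Σ_{i=1}^k h_i λ_i are both positive semidefinite and satisfy E_0 + E_1 = I; that is, {E_0, E_1} is a two-outcome POVM over N-level quantum states. -/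
open Matrix BigOperators ComplexOrder


private lemma trace_eq_sum_eigs {N : ℕ} (M : Matrix (Fin N) (Fin N) ℂ)
    (hM : M.IsHermitian) : M.trace = ∑ i, (hM.eigenvalues i : ℂ) := by
  conv_lhs => rw [hM.spectral_theorem]
  rw [Unitary.conjStarAlgAut_apply]
  rw [trace_mul_cycle, hM.eigenvectorUnitary.prop.1, one_mul, trace_diagonal]
  simp [Function.comp]

private lemma trace_sq_eq_sum_eigs {N : ℕ} (M : Matrix (Fin N) (Fin N) ℂ)
    (hM : M.IsHermitian) : (M * M).trace = ∑ i, ((hM.eigenvalues i : ℂ)) ^ 2 := by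
  set U : Matrix (Fin N) (Fin N) ℂ := (hM.eigenvectorUnitary : Matrix (Fin N) (Fin N) ℂ) with hUdef
  have hU : U * star U = 1 := hM.eigenvectorUnitary.prop.2
  have hD : star U * M * U = diagonal (RCLike.ofReal ∘ hM.eigenvalues) :=
    by
      have hS : M = U * diagonal (RCLike.ofReal ∘ hM.eigenvalues) * star U := by
        rw [hUdef]; conv_lhs => rw [hM.spectral_theorem]
        rw [Unitary.conjStarAlgAut_apply]
      have hU' : star U * U = 1 := hM.eigenvectorUnitary.prop.1
      calc star U * M * U = star U * (U * diagonal (RCLike.ofReal ∘ hM.eigenvalues) * star U) * U := by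
            rw [← hS]
        _ = diagonal (RCLike.ofReal ∘ hM.eigenvalues) := by
            simp only [← mul_assoc, hU', one_mul]; rw [mul_assoc, hU', mul_one]
  have e1 : (star U * M * U) * (star U * M * U) = star U * M * (U * star U) * (M * U) := by
    noncomm_ring
  rw [hU, mul_one] at e1
  have e2 : ((star U * M) * (M * U)).trace = (M * M).trace := by
    rw [trace_mul_comm]
    congr 1
    have e3 : (M * U) * (star U * M) = M * (U * star U) * M := by noncomm_ring
    rw [e3, hU, mul_one]
  calc (M * M).trace = ((star U * M * U) * (star U * M * U)).trace := by rw [e1]; exact e2.symm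
    _ = ((diagonal (RCLike.ofReal ∘ hM.eigenvalues) : Matrix (Fin N) (Fin N) ℂ)
        * diagonal (RCLike.ofReal ∘ hM.eigenvalues)).trace := by rw [hD]
    _ = ∑ i, ((hM.eigenvalues i : ℂ)) ^ 2 := by
        rw [diagonal_mul_diagonal, trace_diagonal]
        simp [Function.comp, sq]

private lemma smul_one_add_smul_posSemidef {N : ℕ} (M : Matrix (Fin N) (Fin N) ℂ)
    (hM : M.IsHermitian) (c b : ℝ)
    (hpos : ∀ i, 0 ≤ c + b * hM.eigenvalues i) :
    ((c : ℂ) • (1 : Matrix (Fin N) (Fin N) ℂ) + (b : ℂ) • M).PosSemidef := by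
  set U : Matrix (Fin N) (Fin N) ℂ := (hM.eigenvectorUnitary : Matrix (Fin N) (Fin N) ℂ) with hUdef
  have hU : U * star U = 1 := hM.eigenvectorUnitary.prop.2
  have hdiag : (diagonal (fun i => ((c + b * hM.eigenvalues i : ℝ) : ℂ)) : Matrix (Fin N) (Fin N) ℂ)
      = (c : ℂ) • (1 : Matrix (Fin N) (Fin N) ℂ)
        + (b : ℂ) • diagonal (RCLike.ofReal ∘ hM.eigenvalues) := by
    ext i j
    by_cases hij : i = j <;>
      simp [hij, diagonal_apply, Matrix.one_apply] <;> push_cast <;> ring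
  have key : (c : ℂ) • (1 : Matrix (Fin N) (Fin N) ℂ) + (b : ℂ) • M
      = U * diagonal (fun i => ((c + b * hM.eigenvalues i : ℝ) : ℂ)) * star U := by
    rw [hdiag]
    symm
    calc U * ((c : ℂ) • (1 : Matrix (Fin N) (Fin N) ℂ)
          + (b : ℂ) • diagonal (RCLike.ofReal ∘ hM.eigenvalues)) * star U
        = (c : ℂ) • (U * star U)
          + (b : ℂ) • (U * diagonal (RCLike.ofReal ∘ hM.eigenvalues) * star U) := by
          simp only [mul_add, add_mul, mul_smul_comm, smul_mul_assoc, mul_one]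
      _ = (c : ℂ) • (1 : Matrix (Fin N) (Fin N) ℂ) + (b : ℂ) • M := by
          rw [hU]; congr 2; rw [hUdef]; conv_rhs => rw [hM.spectral_theorem]
          rw [Unitary.conjStarAlgAut_apply]
  have hd : (diagonal (fun i => ((c + b * hM.eigenvalues i : ℝ) : ℂ)) :
      Matrix (Fin N) (Fin N) ℂ).PosSemidef := by
    rw [posSemidef_diagonal_iff]
    intro i
    exact_mod_cast hpos i
  rw [key, Matrix.star_eq_conjTranspose]
  exact hd.mul_mul_conjTranspose_same U

/-- Lemma 7: for any hyperplane h = (h₁,…,h_k,h_{k+1}) and suitable positive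
α, β, the matrices E₀ = (1/2 − α h_{k+1})·I + β Σᵢ hᵢ λᵢ and
E₁ = (1/2 + α h_{k+1})·I − β Σᵢ hᵢ λᵢ form a two-outcome POVM over N-level
quantum states. -/
theorem embed_measurement (N k : ℕ) (hN : 2 ≤ N) (hk : k + 1 ≤ N ^ 2)
    (lam : Fin k → Matrix (Fin N) (Fin N) ℂ)
    (hherm : ∀ i, (lam i).IsHermitian)
    (htr : ∀ i, (lam i).trace = 0)
    (horth : ∀ i j, (lam i * lam j).trace = if i = j then 2 else 0)
    (h : Fin k → ℝ) (hlast : ℝ)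
    (hbar : ℝ) (hhbar : hbar = Real.sqrt (∑ i, (h i) ^ 2))
    (α β : ℝ) (hα0 : 0 < α) (hβ0 : 0 < β)
    (hα : α ≤ 1 / (2 * (|hlast| + hbar * Real.sqrt (2 * ((N : ℝ) - 1) / (N : ℝ)))))
    (hβ : β ≤ 1 / (2 * (|hlast| + hbar * Real.sqrt (2 * ((N : ℝ) - 1) / (N : ℝ)))))
    (E₀ E₁ : Matrix (Fin N) (Fin N) ℂ)
    (hE₀ : E₀ = ((1 / 2 - α * hlast : ℝ) : ℂ) • (1 : Matrix (Fin N) (Fin N) ℂ) +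
        (β : ℂ) • ∑ i, (h i : ℂ) • lam i)
    (hE₁ : E₁ = ((1 / 2 + α * hlast : ℝ) : ℂ) • (1 : Matrix (Fin N) (Fin N) ℂ) -
        (β : ℂ) • ∑ i, (h i : ℂ) • lam i) :
    E₀.PosSemidef ∧ E₁.PosSemidef ∧ E₀ + E₁ = 1 := by
  set M : Matrix (Fin N) (Fin N) ℂ := ∑ i, (h i : ℂ) • lam i with hMdef
  have hMh : M.IsHermitian := by
    unfold Matrix.IsHermitian
    rw [conjTranspose_sum]
    exact Finset.sum_congr rfl fun i _ => by
      rw [conjTranspose_smul, (hherm i).eq, Complex.star_def, Complex.conj_ofReal]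
  set μ : Fin N → ℝ := hMh.eigenvalues with hμdef
  set s : ℝ := Real.sqrt (2 * ((N : ℝ) - 1) / (N : ℝ)) with hsdef
  have hs0 : 0 ≤ s := Real.sqrt_nonneg _
  have hbar0 : 0 ≤ hbar := hhbar ▸ Real.sqrt_nonneg _
  have hNpos : (0 : ℝ) < (N : ℝ) := by
    have : (0 : ℕ) < N := by omega
    exact_mod_cast this
  have hsum0 : ∑ i, μ i = 0 := by
    have h1 := trace_eq_sum_eigs M hMh
    have htr0 : M.trace = 0 := by
      rw [hMdef, trace_sum]
      simp [trace_smul, htr]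
    rw [htr0] at h1
    exact_mod_cast h1.symm
  have hsumsq : ∑ i, μ i ^ 2 = 2 * ∑ i, h i ^ 2 := by
    have h1 := trace_sq_eq_sum_eigs M hMh
    have h2 : (M * M).trace = ((2 * ∑ i, h i ^ 2 : ℝ) : ℂ) := by
      rw [hMdef]
      simp only [Finset.sum_mul, Finset.mul_sum, smul_mul_assoc, mul_smul_comm, trace_sum,
        trace_smul, horth]
      simp only [smul_eq_mul, mul_ite, mul_zero, Finset.sum_ite_eq', Finset.mem_univ, if_true]
      push_cast
      exact Finset.sum_congr rfl fun i _ => by ring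
    rw [h2] at h1
    exact_mod_cast h1.symm
  have hT : ∑ i, μ i ^ 2 = 2 * hbar ^ 2 := by
    rw [hhbar, Real.sq_sqrt (by positivity)]
    exact hsumsq
  have hsq : s ^ 2 = 2 * ((N : ℝ) - 1) / (N : ℝ) := by
    rw [hsdef]
    refine Real.sq_sqrt ?_
    have h2N : (2 : ℝ) ≤ (N : ℝ) := by exact_mod_cast hN
    exact div_nonneg (by linarith) (by linarith)
  have hbound : ∀ i, |μ i| ≤ hbar * s := by
    intro i
    have h1 : μ i + ∑ j ∈ Finset.univ.erase i, μ j = 0 := by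
      rw [Finset.add_sum_erase _ _ (Finset.mem_univ i)]
      exact hsum0
    have hcs := Finset.sum_mul_sq_le_sq_mul_sq (Finset.univ.erase i) μ (fun _ => 1)
    simp only [mul_one, one_pow, Finset.sum_const, nsmul_eq_mul] at hcs
    have hcard : ((Finset.univ.erase i).card : ℝ) = (N : ℝ) - 1 := by
      rw [Finset.card_erase_of_mem (Finset.mem_univ i), Finset.card_univ, Fintype.card_fin]
      have : (1 : ℕ) ≤ N := by omega
      push_cast [this]
      ring
    rw [hcard] at hcs
    have herase : ∑ j ∈ Finset.univ.erase i, μ j ^ 2 = 2 * hbar ^ 2 - μ i ^ 2 := by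
      rw [Finset.sum_erase_eq_sub (Finset.mem_univ i), hT]
    have h4 : μ i ^ 2 * (N : ℝ) ≤ 2 * hbar ^ 2 * ((N : ℝ) - 1) := by
      have h5 : (∑ j ∈ Finset.univ.erase i, μ j) ^ 2 = μ i ^ 2 := by
        have : ∑ j ∈ Finset.univ.erase i, μ j = -μ i := by linarith
        rw [this]; ring
      rw [h5, herase] at hcs
      have h2N : (2 : ℝ) ≤ (N : ℝ) := by exact_mod_cast hN
      nlinarith [hcs]
    have h6 : μ i ^ 2 ≤ (hbar * s) ^ 2 := by
      rw [mul_pow, hsq, show hbar ^ 2 * (2 * ((N : ℝ) - 1) / (N : ℝ))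
        = 2 * hbar ^ 2 * ((N : ℝ) - 1) / (N : ℝ) by ring, le_div_iff₀ hNpos]
      linarith
    calc |μ i| = Real.sqrt (μ i ^ 2) := (Real.sqrt_sq_eq_abs _).symm
      _ ≤ Real.sqrt ((hbar * s) ^ 2) := Real.sqrt_le_sqrt h6
      _ = hbar * s := Real.sqrt_sq (by positivity)
  set d : ℝ := |hlast| + hbar * s with hddef
  have hd0 : 0 ≤ d := by positivity
  have hdpos : 0 < d := by
    rcases hd0.lt_or_eq with h' | h'
    · exact h'
    · exfalso
      rw [← h'] at hα
      norm_num at hα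
      linarith
  have hαd : α * d ≤ 1 / 2 := by
    rw [le_div_iff₀ (by linarith : (0:ℝ) < 2 * d)] at hα
    nlinarith
  have hβd : β * d ≤ 1 / 2 := by
    rw [le_div_iff₀ (by linarith : (0:ℝ) < 2 * d)] at hβ
    nlinarith
  have hkey : α * |hlast| + β * (hbar * s) ≤ 1 / 2 := by
    have e1 : α * d * |hlast| ≤ 1 / 2 * |hlast| :=
      mul_le_mul_of_nonneg_right hαd (abs_nonneg _)
    have e2 : β * d * (hbar * s) ≤ 1 / 2 * (hbar * s) :=
      mul_le_mul_of_nonneg_right hβd (by positivity)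
    have e3 : (α * |hlast| + β * (hbar * s)) * d ≤ 1 / 2 * d := by
      rw [hddef] at e1 e2 ⊢
      ring_nf at e1 e2 ⊢
      linarith
    exact (mul_le_mul_iff_of_pos_right hdpos).mp e3
  have hpos0 : ∀ i, 0 ≤ (1 / 2 - α * hlast) + β * μ i := by
    intro i
    have h1 : α * hlast ≤ α * |hlast| := mul_le_mul_of_nonneg_left (le_abs_self _) hα0.le
    have h2 : -(hbar * s) ≤ μ i := (abs_le.mp (hbound i)).1
    have h3 : β * -(hbar * s) ≤ β * μ i := mul_le_mul_of_nonneg_left h2 hβ0.le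
    rw [mul_neg] at h3
    linarith
  have hpos1 : ∀ i, 0 ≤ (1 / 2 + α * hlast) + (-β) * μ i := by
    intro i
    have h1 : -(α * |hlast|) ≤ α * hlast := by
      have := mul_le_mul_of_nonneg_left (neg_abs_le hlast) hα0.le
      rw [mul_neg] at this
      linarith
    have h2 : μ i ≤ hbar * s := (abs_le.mp (hbound i)).2
    have h3 : β * μ i ≤ β * (hbar * s) := mul_le_mul_of_nonneg_left h2 hβ0.le
    have h4 : (-β) * μ i = -(β * μ i) := by ring
    rw [h4]
    linarith
  have P0 : E₀.PosSemidef := by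
    rw [hE₀]
    exact smul_one_add_smul_posSemidef M hMh _ _ hpos0
  have P1 : E₁.PosSemidef := by
    have hE₁' : E₁ = ((1 / 2 + α * hlast : ℝ) : ℂ) • (1 : Matrix (Fin N) (Fin N) ℂ)
        + ((-β : ℝ) : ℂ) • M := by
      rw [hE₁, hMdef]
      push_cast
      rw [neg_smul, sub_eq_add_neg]
    rw [hE₁']
    exact smul_one_add_smul_posSemidef M hMh _ _ hpos1
  refine ⟨P0, P1, ?_⟩
  rw [hE₀, hE₁]
  have e : ∀ A B C : Matrix (Fin N) (Fin N) ℂ, A + B + (C - B) = A + C := fun A B C => by abel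
  rw [e, ← add_smul, show ((1 / 2 - α * hlast : ℝ) : ℂ) + ((1 / 2 + α * hlast : ℝ) : ℂ) = 1 by
    push_cast; ring, one_smul]
end

section
/- Let X and Y be finite sets, let f : X×Y → {0,1}, and let n ≥ 1. Suppose there exists an n-qubit unbounded-error one-way quantum protocol for f, i.e., 2ⁿ-level quantum states ρ_x for x ∈ X and 2ⁿ×2ⁿ matrices E_y (with E_y and I−E_y positive semidefinite) for y ∈ Y such that Tr(E_y ρ_x) > 1/2 whenever f(x,y) = 0 and Tr(E_y ρ_x) < 1/2 whenever f(x,y) = 1. Then the communication matrix M_f is realizable by an arrangement of dimension 2^{2n}−1. -/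
open Matrix BigOperators ComplexOrder

/-- The communication matrix M_f(x,y) = (−1)^{f(x,y)} of a Boolean function
f : X×Y → {0,1} as a real-valued matrix. -/
def commMatrix {X Y : Type*} (f : X → Y → Bool) (x : X) (y : Y) : ℝ :=
  if f x y then -1 else 1

/-- A {1,−1}-valued matrix M on X×Y is realizable by an arrangement of
dimension k if there are points p_x ∈ ℝ^k and hyperplanes (h_y, c_y) ∈ ℝ^{k+1}
with sign(Σᵢ pᵢˣ hᵢʸ − c_y) = M(x,y) for all x, y. -/
def RealizableByArrangement {X Y : Type*} (M : X → Y → ℝ) (k : ℕ) : Prop :=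
  ∃ (p : X → Fin k → ℝ) (h : Y → Fin k → ℝ) (c : Y → ℝ),
    ∀ x y, Real.sign (∑ i, p x i * h y i - c y) = M x y

/-- If there is an n-qubit unbounded-error one-way quantum protocol for f,
then the communication matrix M_f is realizable by an arrangement of
dimension 2^{2n}−1. -/
theorem quantum_protocol_to_arrangement
    {X Y : Type*} [Fintype X] [Fintype Y] (f : X → Y → Bool) (n : ℕ) (hn : 1 ≤ n)
    (ρ : X → Matrix (Fin (2 ^ n)) (Fin (2 ^ n)) ℂ)
    (E : Y → Matrix (Fin (2 ^ n)) (Fin (2 ^ n)) ℂ)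
    (hρ : ∀ x, (ρ x).PosSemidef ∧ (ρ x).trace = 1)
    (hE : ∀ y, (E y).PosSemidef ∧ ((1 : Matrix (Fin (2 ^ n)) (Fin (2 ^ n)) ℂ) - E y).PosSemidef)
    (hcorrect : ∀ x y, if f x y then (E y * ρ x).trace.re < 1 / 2
                       else (E y * ρ x).trace.re > 1 / 2) :
    RealizableByArrangement (commMatrix f) (2 ^ (2 * n) - 1) := by
  classical
  have hd : 0 < 2 ^ n := by positivity
  set a : Fin (2 ^ n) := ⟨0, hd⟩ with ha
  -- points and hyperplanes indexed by pairs
  set P : X → Fin (2 ^ n) × Fin (2 ^ n) → ℝ := fun x v =>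
    if v.1 = v.2 then (ρ x v.1 v.1).re
    else if v.1 < v.2 then (ρ x v.1 v.2).re else (ρ x v.1 v.2).im with hP
  set H : Y → Fin (2 ^ n) × Fin (2 ^ n) → ℝ := fun y v =>
    if v.1 = v.2 then (E y v.1 v.1).re - (E y a a).re
    else if v.1 < v.2 then 2 * (E y v.1 v.2).re else 2 * (E y v.1 v.2).im with hH
  have hcard : Fintype.card {v : Fin (2 ^ n) × Fin (2 ^ n) // v ≠ (a, a)}
      = 2 ^ (2 * n) - 1 := by
    have : Fintype.card {v : Fin (2 ^ n) × Fin (2 ^ n) // ¬ v = (a, a)}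
        = Fintype.card (Fin (2 ^ n) × Fin (2 ^ n))
          - Fintype.card {v : Fin (2 ^ n) × Fin (2 ^ n) // v = (a, a)} :=
      Fintype.card_subtype_compl _
    simp only [Fintype.card_subtype_eq, Fintype.card_prod, Fintype.card_fin] at this
    have h2 : 2 ^ n * 2 ^ n = 2 ^ (2 * n) := by
      rw [two_mul, pow_add]
    rw [h2] at this
    exact this
  let e := Fintype.equivFinOfCardEq hcard
  refine ⟨fun x m => P x (e.symm m).1, fun y m => H y (e.symm m).1,
    fun y => 1 / 2 - (E y a a).re, ?_⟩
  intro x y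
  -- Hermitian facts
  have hρH : (ρ x).IsHermitian := (hρ x).1.1
  have hEH : (E y).IsHermitian := (hE y).1.1
  have hρre : ∀ i j, (ρ x j i).re = (ρ x i j).re := fun i j => by
    rw [← hρH.apply i j]; simp [Complex.conj_re]
  have hρim : ∀ i j, (ρ x j i).im = -(ρ x i j).im := fun i j => by
    rw [← hρH.apply i j]; simp [Complex.conj_im]
  have hEre : ∀ i j, (E y j i).re = (E y i j).re := fun i j => by
    rw [← hEH.apply i j]; simp [Complex.conj_re]
  have hEim : ∀ i j, (E y j i).im = -(E y i j).im := fun i j => by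
    rw [← hEH.apply i j]; simp [Complex.conj_im]
  have hρdiag : ∀ i, (ρ x i i).im = 0 := fun i => by
    have := hρim i i; linarith
  have hEdiag : ∀ i, (E y i i).im = 0 := fun i => by
    have := hEim i i; linarith
  have htr1 : ∑ i, (ρ x i i).re = 1 := by
    have := (hρ x).2
    have := congrArg Complex.re this
    simpa [Matrix.trace, Matrix.diag, Complex.re_sum] using this
  -- step 1: sum over Fin k = sum over subtype
  have step1 : ∑ m, P x (e.symm m).1 * H y (e.symm m).1
      = ∑ v : {v : Fin (2 ^ n) × Fin (2 ^ n) // v ≠ (a, a)}, P x v.1 * H y v.1 :=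
    Equiv.sum_comp e.symm (fun v : {v : Fin (2 ^ n) × Fin (2 ^ n) // v ≠ (a, a)} => P x v.1 * H y v.1)
  -- step 2: sum over subtype = sum over full product
  have step2 : ∑ v : {v : Fin (2 ^ n) × Fin (2 ^ n) // v ≠ (a, a)}, P x v.1 * H y v.1
      = ∑ v : Fin (2 ^ n) × Fin (2 ^ n), P x v * H y v := by
    rw [← Finset.sum_subtype (Finset.univ.erase (a, a))
      (fun v => by simp) (fun v => P x v * H y v)]
    exact Finset.sum_erase _ (by simp [hH])
  -- the corrected termwise function
  set F : Fin (2 ^ n) × Fin (2 ^ n) → ℝ := fun v =>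
    (E y v.1 v.2 * ρ x v.2 v.1).re
      - (if v.1 = v.2 then (E y a a).re * (ρ x v.1 v.1).re else 0) with hF
  -- antisymmetry of the difference
  have hanti : ∀ i j : Fin (2 ^ n),
      P x (i, j) * H y (i, j) - F (i, j) = -(P x (j, i) * H y (j, i) - F (j, i)) := by
    intro i j
    rcases lt_trichotomy i j with hij | hij | hij
    · have hne : i ≠ j := ne_of_lt hij
      have hne' : j ≠ i := ne_of_gt hij
      have hnlt : ¬ j < i := not_lt_of_gt hij
      simp only [hP, hH, hF, if_neg hne, if_neg hne', if_pos hij, if_neg hnlt,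
        Complex.mul_re]
      rw [hρre i j, hρim i j, hEre i j, hEim i j]
      ring
    · subst hij
      simp only [hP, hH, hF, if_pos rfl, Complex.mul_re, hρdiag, hEdiag, if_true]
      ring
    · have hne : i ≠ j := ne_of_gt hij
      have hne' : j ≠ i := ne_of_lt hij
      have hnlt : ¬ i < j := not_lt_of_gt hij
      simp only [hP, hH, hF, if_neg hne, if_neg hne', if_pos hij, if_neg hnlt,
        Complex.mul_re]
      rw [hρre j i, hρim j i, hEre j i, hEim j i]
      ring
  -- step 3: sum of P*H equals sum of F
  have step3 : ∑ v : Fin (2 ^ n) × Fin (2 ^ n), P x v * H y v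
      = ∑ v : Fin (2 ^ n) × Fin (2 ^ n), F v := by
    have hswap : ∑ v : Fin (2 ^ n) × Fin (2 ^ n), (P x v * H y v - F v)
        = ∑ v : Fin (2 ^ n) × Fin (2 ^ n), (P x (v.2, v.1) * H y (v.2, v.1) - F (v.2, v.1)) := by
      rw [Fintype.sum_prod_type, Fintype.sum_prod_type]
      exact Finset.sum_comm
    have hzero : ∑ v : Fin (2 ^ n) × Fin (2 ^ n), (P x v * H y v - F v) = 0 := by
      have h2 : ∑ v : Fin (2 ^ n) × Fin (2 ^ n), (P x v * H y v - F v)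
          = -∑ v : Fin (2 ^ n) × Fin (2 ^ n), (P x v * H y v - F v) := by
        calc ∑ v : Fin (2 ^ n) × Fin (2 ^ n), (P x v * H y v - F v)
            = ∑ v : Fin (2 ^ n) × Fin (2 ^ n), (P x (v.2, v.1) * H y (v.2, v.1) - F (v.2, v.1)) :=
              hswap
          _ = ∑ v : Fin (2 ^ n) × Fin (2 ^ n), -(P x (v.1, v.2) * H y (v.1, v.2) - F (v.1, v.2)) :=
              Finset.sum_congr rfl (fun v _ => by rw [← hanti v.2 v.1])
          _ = -∑ v : Fin (2 ^ n) × Fin (2 ^ n), (P x v * H y v - F v) := by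
              rw [← Finset.sum_neg_distrib]
      linarith
    rw [Finset.sum_sub_distrib] at hzero
    linarith
  -- step 4: sum of F equals trace.re - E a a .re
  have step4 : ∑ v : Fin (2 ^ n) × Fin (2 ^ n), F v
      = (E y * ρ x).trace.re - (E y a a).re := by
    have htr : (E y * ρ x).trace.re
        = ∑ v : Fin (2 ^ n) × Fin (2 ^ n), (E y v.1 v.2 * ρ x v.2 v.1).re := by
      rw [Fintype.sum_prod_type]
      simp [Matrix.trace, Matrix.diag, Matrix.mul_apply, Complex.re_sum]
    have hcorr : ∑ v : Fin (2 ^ n) × Fin (2 ^ n),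
        (if v.1 = v.2 then (E y a a).re * (ρ x v.1 v.1).re else 0) = (E y a a).re := by
      rw [Fintype.sum_prod_type]
      have : ∀ i : Fin (2 ^ n), ∑ j, (if i = j then (E y a a).re * (ρ x i i).re else 0)
          = (E y a a).re * (ρ x i i).re := fun i => by
        rw [Finset.sum_ite_eq]; simp
      simp only [this]
      rw [← Finset.mul_sum, htr1, mul_one]
    simp only [hF]
    rw [Finset.sum_sub_distrib, hcorr, htr]
  rw [step1, step2, step3, step4]
  have hsign : (E y * ρ x).trace.re - (E y a a).re - (1 / 2 - (E y a a).re)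
      = (E y * ρ x).trace.re - 1 / 2 := by ring
  rw [hsign]
  have hc := hcorrect x y
  unfold commMatrix
  cases hfb : f x y
  · norm_num [hfb] at hc ⊢
    exact Real.sign_of_pos (by linarith)
  · norm_num [hfb] at hc ⊢
    exact Real.sign_of_neg (by linarith)
end

section
/- Let X and Y be finite sets, let f : X×Y → {0,1}, and suppose the communication matrix M_f is realizable by an arrangement of dimension k. Then for every n ≥ 1 with 2^{2n} ≥ k+1, there exists an n-qubit unbounded-error one-way quantum protocol for f, i.e., 2ⁿ-level quantum states ρ_x for x ∈ X and 2ⁿ×2ⁿ matrices E_y (with E_y and I−E_y positive semidefinite) for y ∈ Y such that Tr(E_y ρ_x) > 1/2 whenever f(x,y) = 0 and Tr(E_y ρ_x) < 1/2 whenever f(x,y) = 1. -/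
open Matrix BigOperators ComplexOrder

section AuxQuantum
set_option linter.unusedSectionVars false

variable {d : ℕ} [NeZero d]

lemma stdbm_conjT (a b : Fin d) :
    (Matrix.single a b (1:ℂ))ᴴ = Matrix.single b a 1 := by
  ext i j
  simp [conjTranspose_apply, Matrix.single, and_comm]

noncomputable def Hm (a b : Fin d) : Matrix (Fin d) (Fin d) ℂ :=
  (1 + Complex.I) • Matrix.single a b 1 + (1 - Complex.I) • Matrix.single b a 1

lemma Hm_herm (a b : Fin d) : (Hm a b).IsHermitian := by
  unfold Matrix.IsHermitian Hm
  rw [conjTranspose_add, conjTranspose_smul, conjTranspose_smul, stdbm_conjT, stdbm_conjT]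
  simp [Complex.ext_iff]
  exact add_comm _ _

lemma trace_Hm (a b : Fin d) : (Hm a b).trace = if a = b then 2 else 0 := by
  unfold Hm
  rcases eq_or_ne a b with h | h
  · subst h
    simp [trace_smul, Matrix.trace_single_eq_same]
    ring
  · simp [trace_smul, Matrix.trace_single_eq_of_ne, h.symm,
      h]

lemma trace_std_mul_std (a b c e : Fin d) :
    (Matrix.single a b (1:ℂ) * Matrix.single c e 1).trace
      = if b = c ∧ e = a then 1 else 0 := by
  rcases eq_or_ne b c with h | h
  · subst h
    rw [Matrix.single_mul_single_same]
    rcases eq_or_ne e a with h2 | h2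
    · subst h2; simp [Matrix.trace_single_eq_same]
    · simp [Matrix.trace_single_eq_of_ne, h2.symm, h2]
  · rw [Matrix.single_mul_single_of_ne (h := h)]
    simp [h]
set_option linter.unusedSectionVars false
set_option maxHeartbeats 1000000

variable {d : ℕ} [NeZero d]

lemma trace_Hm_mul (a b c e : Fin d) :
    (Hm a b * Hm c e).trace = if a = c ∧ b = e then 4 else 0 := by
  unfold Hm
  simp only [add_mul, mul_add, trace_add, smul_mul_smul_comm, trace_smul,
    trace_std_mul_std, smul_eq_mul]
  by_cases h1 : a = c <;> by_cases h2 : b = e <;> by_cases h3 : a = b <;>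
    by_cases h4 : b = c <;> by_cases h5 : a = e <;> simp_all
  all_goals try (split_ifs <;> simp_all)
  all_goals try (intro hx; simp_all)
  all_goals try tauto
  all_goals (ring_nf; simp [Complex.ext_iff]; try norm_num)
noncomputable def Amat (a b : Fin d) : Matrix (Fin d) (Fin d) ℂ :=
  if a = b then (if a = 0 then 0 else Hm a a - Hm 0 0) else Hm a b

noncomputable def Bmat (a b : Fin d) : Matrix (Fin d) (Fin d) ℂ :=
  (1/4 : ℂ) • (if a = b ∧ a = 0 then 0 else Hm a b)

lemma Amat_herm (a b : Fin d) : (Amat a b).IsHermitian := by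
  unfold Amat
  split_ifs
  · exact isHermitian_zero
  · exact (Hm_herm a a).sub (Hm_herm 0 0)
  · exact Hm_herm a b

lemma Bmat_herm (a b : Fin d) : (Bmat a b).IsHermitian := by
  unfold Bmat Matrix.IsHermitian
  rw [conjTranspose_smul]
  split_ifs
  · simp
  · rw [(Hm_herm a b).eq]
    norm_num

lemma trace_Amat (a b : Fin d) : (Amat a b).trace = 0 := by
  unfold Amat
  split_ifs with h1 h2
  · simp
  · simp [trace_sub, trace_Hm]
  · simp [trace_Hm, h1]

lemma trace_Bmat (a b : Fin d) :
    (Bmat a b).trace = if a = b ∧ ¬ a = 0 then (1/2 : ℂ) else 0 := by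
  unfold Bmat
  rw [trace_smul]
  split_ifs with h1 h2 h3 <;> simp_all [trace_Hm] <;> norm_num

lemma trace_Amat_mul_Bmat (a b c e : Fin d) :
    (Amat a b * Bmat c e).trace
      = if a = c ∧ b = e ∧ ¬(a = b ∧ a = 0) then 1 else 0 := by
  unfold Amat Bmat
  rw [Matrix.mul_smul, trace_smul]
  split_ifs with h1 h2 h3 h4 <;>
    simp_all [sub_mul, mul_zero, trace_sub, trace_Hm_mul] <;>
    try (split_ifs <;> simp_all <;> try norm_num)
  all_goals (repeat' (obtain ⟨_, _⟩ := ‹_ ∧ _›); subst_vars; simp_all)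
/-- Quadratic form bound predicate. -/
def QB (M : Matrix (Fin d) (Fin d) ℂ) (K : ℝ) : Prop :=
  ∀ v : Fin d → ℂ, ‖star v ⬝ᵥ M *ᵥ v‖ ≤ K * ∑ i, Complex.normSq (v i)

lemma normSq_le_sum (v : Fin d → ℂ) (a : Fin d) :
    Complex.normSq (v a) ≤ ∑ i, Complex.normSq (v i) :=
  Finset.single_le_sum (fun i _ => Complex.normSq_nonneg (v i)) (Finset.mem_univ a)

lemma QB_std (a b : Fin d) : QB (Matrix.single a b (1:ℂ)) 1 := by
  intro v
  have hform : star v ⬝ᵥ (Matrix.single a b (1:ℂ)) *ᵥ v = star (v a) * v b := by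
    simp [dotProduct, mulVec, Matrix.single, Finset.mul_sum, mul_ite, ite_and]
  rw [hform, one_mul, norm_mul]
  have h1 : ‖star (v a)‖ = ‖v a‖ := by
    simp
  rw [h1]
  have h2 : ‖v a‖ * ‖v b‖
      ≤ (Complex.normSq (v a) + Complex.normSq (v b)) / 2 := by
    rw [← Complex.sq_norm, ← Complex.sq_norm]
    nlinarith [sq_nonneg (‖v a‖ - ‖v b‖)]
  refine h2.trans ?_
  have := normSq_le_sum v a
  have := normSq_le_sum v b
  linarith

lemma QB_one : QB (1 : Matrix (Fin d) (Fin d) ℂ) 1 := by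
  intro v
  have : star v ⬝ᵥ (1 : Matrix (Fin d) (Fin d) ℂ) *ᵥ v
      = ((∑ i, Complex.normSq (v i) : ℝ) : ℂ) := by
    simp [dotProduct, Complex.mul_conj']
    push_cast
    exact Finset.sum_congr rfl fun i _ => by rw [Complex.normSq_eq_conj_mul_self]
  rw [this, one_mul, Complex.norm_real, Real.norm_eq_abs,
    abs_of_nonneg (Finset.sum_nonneg fun i _ => Complex.normSq_nonneg (v i))]

lemma QB.mono {M : Matrix (Fin d) (Fin d) ℂ} {K K' : ℝ} (h : QB M K) (hK : K ≤ K') :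
    QB M K' := fun v =>
  (h v).trans (mul_le_mul_of_nonneg_right hK
    (Finset.sum_nonneg fun i _ => Complex.normSq_nonneg _))

lemma QB.add {M N : Matrix (Fin d) (Fin d) ℂ} {K L : ℝ} (hM : QB M K) (hN : QB N L) :
    QB (M + N) (K + L) := by
  intro v
  rw [add_mulVec, dotProduct_add, add_mul]
  exact (norm_add_le _ _).trans (add_le_add (hM v) (hN v))

lemma QB.smul {M : Matrix (Fin d) (Fin d) ℂ} {K : ℝ} (c : ℂ) (hM : QB M K) :
    QB (c • M) (‖c‖ * K) := by
  intro v
  rw [smul_mulVec, dotProduct_smul, smul_eq_mul, norm_mul, mul_assoc]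
  exact mul_le_mul_of_nonneg_left (hM v) (norm_nonneg c)

lemma QB.zero : QB (0 : Matrix (Fin d) (Fin d) ℂ) 0 := by
  intro v
  simp

lemma QB.neg {M : Matrix (Fin d) (Fin d) ℂ} {K : ℝ} (hM : QB M K) : QB (-M) K := by
  intro v
  rw [neg_mulVec, dotProduct_neg, norm_neg]
  exact hM v

lemma QB.sub {M N : Matrix (Fin d) (Fin d) ℂ} {K L : ℝ} (hM : QB M K) (hN : QB N L) :
    QB (M - N) (K + L) := by
  rw [sub_eq_add_neg]
  exact hM.add hN.neg

lemma QB_Hm (a b : Fin d) : QB (Hm a b) 3 := by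
  have h := ((QB_std a b).smul (1 + Complex.I)).add ((QB_std b a).smul (1 - Complex.I))
  refine h.mono ?_
  have h1 : ‖1 + Complex.I‖ = Real.sqrt 2 := by
    simp [Complex.norm_def, Complex.normSq_apply]
    norm_num
  have h2 : ‖1 - Complex.I‖ = Real.sqrt 2 := by
    simp [Complex.norm_def, Complex.normSq_apply]
    norm_num
  rw [h1, h2]
  nlinarith [Real.sq_sqrt (by norm_num : (0:ℝ) ≤ 2), Real.sqrt_nonneg 2]

lemma QB_Amat (a b : Fin d) : QB (Amat a b) 6 := by
  unfold Amat
  split_ifs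
  · exact QB.zero.mono (by norm_num)
  · exact ((QB_Hm a a).sub (QB_Hm 0 0)).mono (by norm_num)
  · exact (QB_Hm a b).mono (by norm_num)

lemma QB_Bmat (a b : Fin d) : QB (Bmat a b) 2 := by
  unfold Bmat
  have hin : QB (if a = b ∧ a = 0 then 0 else Hm a b) 3 := by
    split_ifs
    · exact QB.zero.mono (by norm_num)
    · exact QB_Hm a b
  refine (hin.smul (1/4 : ℂ)).mono ?_
  rw [norm_div]
  simp
  norm_num

lemma QB.sum {α : Type*} (s : Finset α) (f : α → Matrix (Fin d) (Fin d) ℂ) (K : α → ℝ)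
    (h : ∀ i ∈ s, QB (f i) (K i)) : QB (∑ i ∈ s, f i) (∑ i ∈ s, K i) := by
  classical
  induction s using Finset.induction_on with
  | empty => simpa using QB.zero
  | insert _ _ hx ih =>
    rename_i a s
    rw [Finset.sum_insert hx, Finset.sum_insert hx]
    exact (h a (Finset.mem_insert_self a s)).add
      (ih fun i hi => h i (Finset.mem_insert_of_mem hi))
lemma herm_real_smul {M : Matrix (Fin d) (Fin d) ℂ} (r : ℝ) (h : M.IsHermitian) :
    ((r : ℂ) • M).IsHermitian := by
  unfold Matrix.IsHermitian at *
  rw [conjTranspose_smul, h]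
  congr 1
  simp

lemma herm_sum {α : Type*} (s : Finset α) (f : α → Matrix (Fin d) (Fin d) ℂ)
    (h : ∀ i ∈ s, (f i).IsHermitian) : (∑ i ∈ s, f i).IsHermitian := by
  classical
  induction s using Finset.induction_on with
  | empty => simpa using isHermitian_zero
  | insert _ _ hx ih =>
    rename_i a s
    rw [Finset.sum_insert hx]
    exact (h a (Finset.mem_insert_self a s)).add
      (ih fun i hi => h i (Finset.mem_insert_of_mem hi))

/-- Hermitian quadratic forms are self-conjugate. -/
lemma herm_form_self {N : Matrix (Fin d) (Fin d) ℂ} (hN : N.IsHermitian)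
    (v : Fin d → ℂ) : star (star v ⬝ᵥ N *ᵥ v) = star v ⬝ᵥ N *ᵥ v := by
  have h1 : star (star v ⬝ᵥ N *ᵥ v) = star (N *ᵥ v) ⬝ᵥ v := by
    rw [star_dotProduct]
    simp
  rw [h1, star_mulVec, hN.eq, dotProduct_mulVec]

lemma psd_main {c : ℝ} {N : Matrix (Fin d) (Fin d) ℂ} (hN : N.IsHermitian) {K : ℝ}
    (hQB : QB N K) (hcK : K ≤ c) : ((c : ℂ) • 1 + N).PosSemidef := by
  refine posSemidef_iff_dotProduct_mulVec.mpr ⟨?_, ?_⟩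
  · exact (herm_real_smul c isHermitian_one).add hN
  · intro v
    set s : ℝ := ∑ i, Complex.normSq (v i) with hs
    have hsnn : 0 ≤ s := Finset.sum_nonneg fun i _ => Complex.normSq_nonneg _
    have hform : star v ⬝ᵥ ((c : ℂ) • 1 + N) *ᵥ v
        = (c : ℂ) * (s : ℂ) + star v ⬝ᵥ N *ᵥ v := by
      rw [add_mulVec, dotProduct_add, smul_mulVec, dotProduct_smul, one_mulVec,
        smul_eq_mul]
      congr 1
      have : star v ⬝ᵥ v = ((s : ℝ) : ℂ) := by
        rw [hs]
        push_cast
        simp only [dotProduct, Pi.star_apply]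
        exact Finset.sum_congr rfl fun i _ => by
          rw [Complex.normSq_eq_conj_mul_self]; rfl
      rw [this]
    rw [hform]
    set z : ℂ := star v ⬝ᵥ N *ᵥ v with hz
    have hzim : z.im = 0 := by
      have := herm_form_self hN v
      rw [← hz] at this
      have := congrArg Complex.im this
      simp at this
      linarith
    have hzre : -(K * s) ≤ z.re := by
      have h1 : ‖z‖ ≤ K * s := hQB v
      have h2 : |z.re| ≤ ‖z‖ := Complex.abs_re_le_norm z
      have h3 : -(‖z‖) ≤ z.re := by
        rcases abs_le.mp h2 with ⟨hl, _⟩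
        linarith
      linarith
    rw [Complex.le_def]
    constructor
    · simp only [Complex.add_re, Complex.mul_re, Complex.ofReal_re, Complex.ofReal_im,
        Complex.zero_re]
      nlinarith
    · simp [hzim]
end AuxQuantum

/-- If the communication matrix M_f is realizable by an arrangement of
dimension k, then for every n ≥ 1 with 2^{2n} ≥ k+1, there is an n-qubit
unbounded-error one-way quantum protocol for f. -/
theorem arrangement_to_quantum_protocol
    {X Y : Type*} [Fintype X] [Fintype Y] (f : X → Y → Bool) (k : ℕ)
    (hreal : RealizableByArrangement (commMatrix f) k)
    (n : ℕ) (hn : 1 ≤ n) (hk : k + 1 ≤ 2 ^ (2 * n)) :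
    ∃ (ρ : X → Matrix (Fin (2 ^ n)) (Fin (2 ^ n)) ℂ)
      (E : Y → Matrix (Fin (2 ^ n)) (Fin (2 ^ n)) ℂ),
      (∀ x, (ρ x).PosSemidef ∧ (ρ x).trace = 1) ∧
      (∀ y, (E y).PosSemidef ∧
        ((1 : Matrix (Fin (2 ^ n)) (Fin (2 ^ n)) ℂ) - E y).PosSemidef) ∧
      (∀ x y, if f x y then (E y * ρ x).trace.re < 1 / 2
              else (E y * ρ x).trace.re > 1 / 2) := by
  classical
  obtain ⟨p, h, c, hsign⟩ := hreal
  haveI : NeZero (2 ^ n) := ⟨pow_ne_zero n two_ne_zero⟩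
  set D : ℕ := 2 ^ n with hD
  have hDpos : 0 < D := Nat.pow_pos (by norm_num)
  have hDD : k + 1 ≤ D * D := by
    calc k + 1 ≤ 2 ^ (2 * n) := hk
    _ = D * D := by rw [hD, two_mul, pow_add]
  -- the index embedding
  set ι : Fin k → Fin D × Fin D :=
    fun i => finProdFinEquiv.symm ⟨i + 1, by omega⟩ with hι
  have hι_apply : ∀ i : Fin k, finProdFinEquiv (ι i) = ⟨i + 1, by omega⟩ := by
    intro i
    rw [hι, Equiv.apply_symm_apply]
  have hι0 : ∀ i, ι i ≠ ((0 : Fin D), (0 : Fin D)) := by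
    intro i hcon
    have h2 : finProdFinEquiv (ι i) = finProdFinEquiv ((0 : Fin D), (0 : Fin D)) := by
      rw [hcon]
    rw [hι_apply i] at h2
    have h3 : (finProdFinEquiv ((0 : Fin D), (0 : Fin D)) : Fin (D*D)).val = 0 := by
      simp [finProdFinEquiv]
    rw [← h2] at h3
    simp at h3
  have hι_inj : Function.Injective ι := by
    intro i j hij
    have h2 : finProdFinEquiv (ι i) = finProdFinEquiv (ι j) := by rw [hij]
    rw [hι_apply i, hι_apply j] at h2
    have := Fin.mk.injEq .. ▸ h2
    have h3 : (i : ℕ) + 1 = (j : ℕ) + 1 := by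
      simpa [Fin.ext_iff] using h2
    exact Fin.ext (by omega)
  -- basis families
  set A' : Fin k → Matrix (Fin D) (Fin D) ℂ := fun i => Amat (ι i).1 (ι i).2 with hA'
  set B' : Fin k → Matrix (Fin D) (Fin D) ℂ := fun i => Bmat (ι i).1 (ι i).2 with hB'
  set tB : Fin k → ℝ :=
    fun i => if (ι i).1 = (ι i).2 ∧ ¬(ι i).1 = 0 then 1/2 else 0 with htBdef
  have htB : ∀ i, (B' i).trace = ((tB i : ℝ) : ℂ) := by
    intro i
    rw [hB', trace_Bmat, htBdef]
    split_ifs with hc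
    · simp only [if_pos hc]; norm_num
    · simp only [if_neg hc]; norm_num
  have hBA : ∀ i j, (B' j * A' i).trace = if i = j then 1 else 0 := by
    intro i j
    rw [trace_mul_comm, hA', hB', trace_Amat_mul_Bmat]
    rcases eq_or_ne i j with rfl | hij
    · rw [if_pos rfl,
        if_pos ⟨rfl, rfl, fun hcon => hι0 i (Prod.ext hcon.2 (hcon.1.symm.trans hcon.2))⟩]
    · rw [if_neg (fun hc => hij (hι_inj (Prod.ext hc.1 hc.2.1))), if_neg hij]
  -- Alice's side
  set Ax : X → Matrix (Fin D) (Fin D) ℂ :=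
    fun x => ∑ i, ((p x i : ℝ) : ℂ) • A' i with hAx
  set KA : X → ℝ := fun x => ∑ i, |p x i| * 6 with hKA
  have hQBA : ∀ x, QB (Ax x) (KA x) := by
    intro x
    rw [hAx, hKA]
    refine QB.sum _ _ _ fun i _ => ?_
    have := (QB_Amat (ι i).1 (ι i).2).smul ((p x i : ℝ) : ℂ)
    rw [Complex.norm_real, Real.norm_eq_abs] at this
    exact this
  have hermAx : ∀ x, (Ax x).IsHermitian := by
    intro x
    exact herm_sum _ _ fun i _ => herm_real_smul _ (Amat_herm _ _)
  have htrAx : ∀ x, (Ax x).trace = 0 := by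
    intro x
    rw [hAx, trace_sum]
    refine Finset.sum_eq_zero fun i _ => ?_
    rw [trace_smul, hA', trace_Amat, smul_zero]
  have hKAnn : ∀ x, 0 ≤ KA x := by
    intro x
    exact Finset.sum_nonneg fun i _ => by positivity
  set SA : ℝ := ∑ x, KA x with hSA
  have hSAnn : 0 ≤ SA := Finset.sum_nonneg fun x _ => hKAnn x
  have hKAle : ∀ x, KA x ≤ SA :=
    fun x => Finset.single_le_sum (fun x _ => hKAnn x) (Finset.mem_univ x)
  set ε : ℝ := ((D : ℝ)⁻¹) / (1 + SA) with hε
  have hεpos : 0 < ε := by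
    apply div_pos (by positivity) (by linarith)
  have hεK : ∀ x, ε * KA x ≤ (D : ℝ)⁻¹ := by
    intro x
    have h1 : ε * KA x ≤ ε * (1 + SA) := by
      apply mul_le_mul_of_nonneg_left _ hεpos.le
      linarith [hKAle x]
    have h2 : ε * (1 + SA) = (D : ℝ)⁻¹ := by
      rw [hε]
      field_simp
    linarith
  set ρ : X → Matrix (Fin D) (Fin D) ℂ :=
    fun x => (((D : ℝ)⁻¹ : ℝ) : ℂ) • 1 + ((ε : ℝ) : ℂ) • Ax x with hρ
  have hρPSD : ∀ x, (ρ x).PosSemidef := by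
    intro x
    refine psd_main (herm_real_smul _ (hermAx x)) ((hQBA x).smul _) ?_
    rw [Complex.norm_real, Real.norm_eq_abs, abs_of_nonneg hεpos.le]
    exact hεK x
  have hρtr : ∀ x, (ρ x).trace = 1 := by
    intro x
    rw [hρ, trace_add, trace_smul, trace_smul, htrAx, trace_one, smul_zero, add_zero]
    simp only [Fintype.card_fin, smul_eq_mul]
    rw [← Complex.ofReal_natCast, ← Complex.ofReal_mul,
      inv_mul_cancel₀ (by exact_mod_cast hDpos.ne' : (D:ℝ) ≠ 0)]
    norm_num
  -- Bob's side
  set By : Y → Matrix (Fin D) (Fin D) ℂ :=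
    fun y => ∑ i, ((h y i : ℝ) : ℂ) • B' i with hBy
  set γ : Y → ℝ := fun y => (∑ i, h y i * tB i) / D + ε * c y with hγ
  set N' : Y → Matrix (Fin D) (Fin D) ℂ :=
    fun y => By y - ((γ y : ℝ) : ℂ) • 1 with hN'
  set KB : Y → ℝ := fun y => (∑ i, |h y i| * 2) + |γ y| with hKB
  have hQBB : ∀ y, QB (N' y) (KB y) := by
    intro y
    rw [hN', hKB]
    refine QB.sub ?_ ?_
    · rw [hBy]
      refine QB.sum _ _ _ fun i _ => ?_
      have := (QB_Bmat (ι i).1 (ι i).2).smul ((h y i : ℝ) : ℂ)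
      rw [Complex.norm_real, Real.norm_eq_abs] at this
      exact this
    · have := (QB_one (d := D)).smul ((γ y : ℝ) : ℂ)
      rw [Complex.norm_real, Real.norm_eq_abs, mul_one] at this
      exact this
  have hermN' : ∀ y, (N' y).IsHermitian := by
    intro y
    exact ((herm_sum _ _ fun i _ => herm_real_smul _ (Bmat_herm _ _)).sub
      (herm_real_smul _ isHermitian_one))
  have htrBy : ∀ y, (By y).trace = (((∑ i, h y i * tB i : ℝ)) : ℂ) := by
    intro y
    rw [hBy, trace_sum]
    push_cast
    refine Finset.sum_congr rfl fun i _ => ?_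
    rw [trace_smul, htB i, smul_eq_mul]
  have hKBnn : ∀ y, 0 ≤ KB y := by
    intro y
    have h1 : (0:ℝ) ≤ ∑ i, |h y i| * 2 := Finset.sum_nonneg fun i _ => by positivity
    have h2 : (0:ℝ) ≤ |γ y| := abs_nonneg _
    rw [hKB]
    positivity
  set SB : ℝ := ∑ y, KB y with hSB
  have hSBnn : 0 ≤ SB := Finset.sum_nonneg fun y _ => hKBnn y
  have hKBle : ∀ y, KB y ≤ SB :=
    fun y => Finset.single_le_sum (fun y _ => hKBnn y) (Finset.mem_univ y)
  set δ : ℝ := (1/2 : ℝ) / (1 + SB) with hδ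
  have hδpos : 0 < δ := by
    apply div_pos (by norm_num) (by linarith)
  have hδK : ∀ y, δ * KB y ≤ 1/2 := by
    intro y
    have h1 : δ * KB y ≤ δ * (1 + SB) := by
      apply mul_le_mul_of_nonneg_left _ hδpos.le
      linarith [hKBle y]
    have h2 : δ * (1 + SB) = 1/2 := by
      rw [hδ]
      field_simp
    exact h1.trans_eq h2
  set E : Y → Matrix (Fin D) (Fin D) ℂ :=
    fun y => (((1:ℝ)/2 : ℝ) : ℂ) • 1 + ((δ : ℝ) : ℂ) • N' y with hE
  have hEPSD : ∀ y, (E y).PosSemidef := by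
    intro y
    refine psd_main (herm_real_smul _ (hermN' y)) ((hQBB y).smul _) ?_
    rw [Complex.norm_real, Real.norm_eq_abs, abs_of_nonneg hδpos.le]
    exact hδK y
  have hEPSD2 : ∀ y, ((1 : Matrix (Fin D) (Fin D) ℂ) - E y).PosSemidef := by
    intro y
    have heq : (1 : Matrix (Fin D) (Fin D) ℂ) - E y
        = (((1:ℝ)/2 : ℝ) : ℂ) • 1 + (-(((δ : ℝ) : ℂ) • N' y)) := by
      have hone : (1 : Matrix (Fin D) (Fin D) ℂ)
          = (((1:ℝ)/2 : ℝ) : ℂ) • 1 + (((1:ℝ)/2 : ℝ) : ℂ) • 1 := by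
        rw [← add_smul]
        norm_num
      rw [hE]
      push_cast
      module
    rw [heq]
    refine psd_main ?_ (((hQBB y).smul _).neg) ?_
    · have h1 := herm_real_smul δ (hermN' y)
      exact IsHermitian.neg h1
    · rw [Complex.norm_real, Real.norm_eq_abs, abs_of_nonneg hδpos.le]
      exact hδK y
  -- trace identities
  have hDneC : ((D : ℕ) : ℂ) ≠ 0 := by
    exact_mod_cast hDpos.ne'
  have htrN' : ∀ y, (N' y).trace
      = ((∑ i, h y i * tB i : ℝ) : ℂ) - ((γ y : ℝ) : ℂ) * D := by
    intro y
    rw [hN', trace_sub, trace_smul, trace_one, htrBy]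
    simp [Fintype.card_fin]
  have htrBA : ∀ y x, (By y * Ax x).trace = ((∑ i, p x i * h y i : ℝ) : ℂ) := by
    intro y x
    rw [hBy, hAx, Finset.sum_mul, trace_sum]
    have hterm : ∀ i, ((((h y i : ℝ) : ℂ) • B' i) * ∑ j, ((p x j : ℝ) : ℂ) • A' j).trace
        = ((h y i : ℝ) : ℂ) * ((p x i : ℝ) : ℂ) := by
      intro i
      rw [smul_mul_assoc, trace_smul, Finset.mul_sum, trace_sum, smul_eq_mul]
      have hcol : ∑ j, ((B' i) * (((p x j : ℝ) : ℂ) • A' j)).trace = ((p x i : ℝ) : ℂ) := by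
        have heach : ∀ j, ((B' i) * (((p x j : ℝ) : ℂ) • A' j)).trace
            = if j = i then ((p x j : ℝ) : ℂ) else 0 := by
          intro j
          rw [mul_smul_comm, trace_smul, hBA j i, smul_eq_mul]
          split_ifs <;> simp
        rw [Finset.sum_congr rfl fun j _ => heach j]
        simp
      rw [hcol]
    rw [Finset.sum_congr rfl fun i _ => hterm i]
    push_cast
    refine Finset.sum_congr rfl fun i _ => ?_
    ring
  have htrN'A : ∀ y x, (N' y * Ax x).trace = ((∑ i, p x i * h y i : ℝ) : ℂ) := by
    intro y x
    rw [hN', sub_mul, trace_sub, smul_mul_assoc, Matrix.one_mul, trace_smul, htrAx,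
      smul_zero, sub_zero, htrBA]
  have hEρ : ∀ x y, (E y * ρ x).trace
      = ((1/2 + δ * ε * ((∑ i, p x i * h y i) - c y) : ℝ) : ℂ) := by
    intro x y
    rw [hE, hρ]
    simp only [add_mul, mul_add, smul_mul_assoc, mul_smul_comm, Matrix.one_mul,
      Matrix.mul_one, trace_add, trace_smul, smul_eq_mul, trace_one, Fintype.card_fin,
      htrAx, htrN' y, htrN'A y x, mul_zero, add_zero, smul_zero]
    have hγy : γ y = (∑ i, h y i * tB i) / D + ε * c y := by rw [hγ]
    rw [hγy]
    push_cast
    field_simp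
    ring
  -- conclusion
  refine ⟨ρ, E, fun x => ⟨hρPSD x, hρtr x⟩, fun y => ⟨hEPSD y, hEPSD2 y⟩, ?_⟩
  intro x y
  have ht := hsign x y
  have hre : (E y * ρ x).trace.re
      = 1/2 + δ * ε * ((∑ i, p x i * h y i) - c y) := by
    rw [hEρ x y, Complex.ofReal_re]
  have hδε : 0 < δ * ε := mul_pos hδpos hεpos
  cases hf : f x y with
  | true =>
    simp only [hf, if_true]
    rw [hre]
    simp only [commMatrix, hf, if_true] at ht
    have htneg : (∑ i, p x i * h y i - c y) < 0 := by
      rcases lt_trichotomy (∑ i, p x i * h y i - c y) 0 with hlt | heq | hgt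
      · exact hlt
      · rw [heq, Real.sign_zero] at ht
        norm_num at ht
      · rw [Real.sign_of_pos hgt] at ht
        norm_num at ht
    nlinarith
  | false =>
    simp only [hf, Bool.false_eq_true, if_false, gt_iff_lt]
    rw [hre]
    simp only [commMatrix, hf, if_false] at ht
    have htpos : 0 < (∑ i, p x i * h y i - c y) := by
      rcases lt_trichotomy (∑ i, p x i * h y i - c y) 0 with hlt | heq | hgt
      · rw [Real.sign_of_neg hlt] at ht
        norm_num at ht
      · rw [heq, Real.sign_zero] at ht
        norm_num at ht
      · exact hgt
    have hprod := mul_pos hδε htpos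
    linarith
end

section
/- Let X and Y be finite sets, let f : X×Y → {0,1}, and let N ≥ 1. Suppose there exists an unbounded-error one-way classical protocol for f with N messages, i.e., probability vectors q_x ∈ ℝ^N (all entries nonnegative, summing to 1) for x ∈ X and vectors l_y ∈ [0,1]^N for y ∈ Y such that Σ_{i=1}^N q_i^x l_i^y > 1/2 whenever f(x,y) = 0 and Σ_{i=1}^N q_i^x l_i^y < 1/2 whenever f(x,y) = 1. Then the communication matrix M_f is realizable by an arrangement of dimension N−1. -/
open BigOperators

/-- If there is an unbounded-error one-way classical protocol for f with N
messages, then the communication matrix M_f is realizable by an arrangement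
of dimension N−1. -/
theorem classical_protocol_to_arrangement
    {X Y : Type*} [Fintype X] [Fintype Y] (f : X → Y → Bool) (N : ℕ) (hN : 1 ≤ N)
    (q : X → Fin N → ℝ) (l : Y → Fin N → ℝ)
    (hq0 : ∀ x i, 0 ≤ q x i) (hq1 : ∀ x, ∑ i, q x i = 1)
    (hl : ∀ y i, 0 ≤ l y i ∧ l y i ≤ 1)
    (hcorrect : ∀ x y, if f x y then ∑ i, q x i * l y i < 1 / 2
                       else ∑ i, q x i * l y i > 1 / 2) :
    RealizableByArrangement (commMatrix f) (N - 1) := by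
  obtain ⟨m, rfl⟩ : ∃ m, N = m + 1 := ⟨N - 1, (Nat.succ_pred_eq_of_pos hN).symm⟩
  simp only [Nat.add_sub_cancel]
  refine ⟨fun x (i : Fin m) => q x i.castSucc,
    fun y (i : Fin m) => l y i.castSucc - l y (Fin.last m),
    fun y => 1/2 - l y (Fin.last m), fun x y => ?_⟩
  dsimp only
  have key : ∑ i : Fin m, q x i.castSucc * (l y i.castSucc - l y (Fin.last m)) -
      (1/2 - l y (Fin.last m)) = ∑ i, q x i * l y i - 1/2 := by
    have h1 := hq1 x
    rw [Fin.sum_univ_castSucc (f := fun i => q x i)] at h1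
    rw [Fin.sum_univ_castSucc (f := fun i => q x i * l y i)]
    simp only [mul_sub, Finset.sum_sub_distrib, ← Finset.sum_mul]
    linear_combination (-l y (Fin.last m)) * h1
  rw [key]
  have hc := hcorrect x y
  unfold commMatrix
  by_cases hf : f x y <;> simp [hf] at hc ⊢
  · exact Real.sign_of_neg (by linarith)
  · exact Real.sign_of_pos (by linarith)
end

section
/- Let X and Y be finite sets, let f : X×Y → {0,1}, and suppose the communication matrix M_f is realizable by an arrangement of dimension k. Then there exists an unbounded-error one-way classical protocol for f with k+1 messages, i.e., probability vectors q_x ∈ ℝ^{k+1} (all entries nonnegative, summing to 1) for x ∈ X and vectors l_y ∈ [0,1]^{k+1} for y ∈ Y such that Σ_{i=1}^{k+1} q_i^x l_i^y > 1/2 whenever f(x,y) = 0 and Σ_{i=1}^{k+1} q_i^x l_i^y < 1/2 whenever f(x,y) = 1. -/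
open BigOperators

/-- If the communication matrix M_f is realizable by an arrangement of
dimension k, then there is an unbounded-error one-way classical protocol for
f with k+1 messages. -/
theorem arrangement_to_classical_protocol
    {X Y : Type*} [Fintype X] [Fintype Y] (f : X → Y → Bool) (k : ℕ)
    (hreal : RealizableByArrangement (commMatrix f) k) :
    ∃ (q : X → Fin (k + 1) → ℝ) (l : Y → Fin (k + 1) → ℝ),
      (∀ x i, 0 ≤ q x i) ∧ (∀ x, ∑ i, q x i = 1) ∧
      (∀ y i, 0 ≤ l y i ∧ l y i ≤ 1) ∧
      (∀ x y, if f x y then ∑ i, q x i * l y i < 1 / 2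
              else ∑ i, q x i * l y i > 1 / 2) := by
  obtain ⟨p, h, c, hs⟩ := hreal
  -- A large shift constant
  set T : ℝ := 1 + ∑ x : X, ∑ i : Fin k, |p x i| with hTdef
  have hTabs : ∀ x i, |p x i| + 1 ≤ T := by
    intro x i
    have h1 : |p x i| ≤ ∑ i : Fin k, |p x i| :=
      Finset.single_le_sum (f := fun j => |p x j|) (fun j _ => abs_nonneg _) (Finset.mem_univ i)
    have h2 : ∑ i : Fin k, |p x i| ≤ ∑ x : X, ∑ i : Fin k, |p x i| :=
      Finset.single_le_sum (f := fun x => ∑ i : Fin k, |p x i|)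
        (fun j _ => Finset.sum_nonneg fun _ _ => abs_nonneg _) (Finset.mem_univ x)
    simp only [hTdef]; linarith
  have hT1 : (1 : ℝ) ≤ T := by
    have : (0 : ℝ) ≤ ∑ x : X, ∑ i : Fin k, |p x i| :=
      Finset.sum_nonneg fun _ _ => Finset.sum_nonneg fun _ _ => abs_nonneg _
    simp only [hTdef]; linarith
  -- Augmented points and hyperplanes
  set p' : X → Fin (k + 1) → ℝ := fun x => Fin.snoc (p x) 1 with hp'def
  set h'' : Y → Fin (k + 1) → ℝ :=
    fun y => Fin.snoc (h y) ((-(c y) - T * ∑ i, h y i) / (1 + T)) with hh''def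
  set S : X → ℝ := fun x => ∑ i, (p' x i + T) with hSdef
  have hp'T : ∀ x i, (1 : ℝ) ≤ p' x i + T := by
    intro x i
    refine Fin.lastCases ?_ (fun j => ?_) i
    · simp only [hp'def, Fin.snoc_last]; linarith
    · simp only [hp'def, Fin.snoc_castSucc]
      have := hTabs x j
      have := neg_abs_le (p x j)
      linarith
  have hSpos : ∀ x, (0 : ℝ) < S x := by
    intro x
    have h1 : (∑ _i : Fin (k + 1), (1 : ℝ)) ≤ ∑ i, (p' x i + T) :=
      Finset.sum_le_sum fun i _ => hp'T x i
    have h2 : (0 : ℝ) < ∑ _i : Fin (k + 1), (1 : ℝ) := by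
      simp; positivity
    simp only [hSdef]; linarith
  set q : X → Fin (k + 1) → ℝ := fun x i => (p' x i + T) / S x with hqdef
  set ε : Y → ℝ := fun y => 1 / (2 * (1 + ∑ i, |h'' y i|)) with hεdef
  have habs_nonneg : ∀ y, (0 : ℝ) ≤ ∑ i, |h'' y i| := fun y =>
    Finset.sum_nonneg fun _ _ => abs_nonneg _
  have hεpos : ∀ y, 0 < ε y := by
    intro y
    have := habs_nonneg y
    simp only [hεdef]
    positivity
  set l : Y → Fin (k + 1) → ℝ := fun y i => 1 / 2 + ε y * h'' y i with hldef
  refine ⟨q, l, ?_, ?_, ?_, ?_⟩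
  · intro x i
    have := hp'T x i
    have := hSpos x
    simp only [hqdef]
    positivity
  · intro x
    simp only [hqdef]
    rw [← Finset.sum_div]
    exact div_self (hSpos x).ne'
  · intro y i
    have hεb : ε y * |h'' y i| ≤ 1 / 2 := by
      have h1 : |h'' y i| ≤ ∑ j, |h'' y j| :=
        Finset.single_le_sum (f := fun j => |h'' y j|) (fun j _ => abs_nonneg _)
          (Finset.mem_univ i)
      have h2 := habs_nonneg y
      have h3 : (0 : ℝ) < 1 + ∑ j, |h'' y j| := by linarith
      have : ε y * |h'' y i| ≤ ε y * (1 + ∑ j, |h'' y j|) := by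
        have := (hεpos y).le
        nlinarith
      calc ε y * |h'' y i| ≤ ε y * (1 + ∑ j, |h'' y j|) := this
        _ = 1 / 2 := by
          simp only [hεdef]
          field_simp
    have hb1 := neg_abs_le (h'' y i)
    have hb2 := le_abs_self (h'' y i)
    have hε := (hεpos y).le
    constructor
    · simp only [hldef]
      nlinarith
    · simp only [hldef]
      nlinarith
  · intro x y
    have hT0 : (0 : ℝ) < 1 + T := by linarith
    -- Key algebraic identity
    have hkey : ∑ i, (p' x i + T) * h'' y i = (∑ i, p x i * h y i) - c y := by
      rw [Fin.sum_univ_castSucc]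
      simp only [hp'def, hh''def, Fin.snoc_castSucc, Fin.snoc_last]
      have : ∑ i : Fin k, (p x i + T) * h y i
          = (∑ i, p x i * h y i) + T * ∑ i, h y i := by
        rw [Finset.mul_sum, ← Finset.sum_add_distrib]
        exact Finset.sum_congr rfl fun i _ => by ring
      rw [this]
      field_simp
      ring
    have hsum : ∑ i, q x i * l y i
        = 1 / 2 + ε y / S x * ((∑ i, p x i * h y i) - c y) := by
      have hexp : ∀ i, q x i * l y i
          = (1 / 2) * q x i + (ε y / S x) * ((p' x i + T) * h'' y i) := by
        intro i
        simp only [hqdef, hldef]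
        field_simp
      rw [Finset.sum_congr rfl fun i _ => hexp i, Finset.sum_add_distrib,
        ← Finset.mul_sum, ← Finset.mul_sum, hkey]
      have hq1 : ∑ i, q x i = 1 := by
        simp only [hqdef]
        rw [← Finset.sum_div]
        exact div_self (hSpos x).ne'
      rw [hq1]; ring
    have hεS : 0 < ε y / S x := div_pos (hεpos y) (hSpos x)
    have hsign := hs x y
    unfold commMatrix at hsign
    set D : ℝ := (∑ i, p x i * h y i) - c y with hDdef
    by_cases hf : f x y
    · simp only [hf, if_true] at hsign ⊢
      have hD : D < 0 := by
        rcases lt_trichotomy D 0 with hlt | heq | hgt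
        · exact hlt
        · rw [heq, Real.sign_zero] at hsign; norm_num at hsign
        · rw [Real.sign_of_pos hgt] at hsign; norm_num at hsign
      rw [hsum]
      have := mul_pos hεS (neg_pos.mpr hD)
      linarith
    · simp only [hf, if_false] at hsign ⊢
      have hsign : Real.sign D = 1 := by simpa using hsign
      have hD : 0 < D := by
        rcases lt_trichotomy D 0 with hlt | heq | hgt
        · rw [Real.sign_of_neg hlt] at hsign; norm_num at hsign
        · rw [heq, Real.sign_zero] at hsign; norm_num at hsign
        · exact hgt
      rw [hsum]
      have := mul_pos hεS hD
      simp only [Bool.false_eq_true, if_false]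
      linarith
end

section
/- For every n ≥ 1 there exists a (2^{2n}−1, n, >1/2)-QRAC: that is, setting m = 2^{2n}−1, there exist 2ⁿ×2ⁿ complex positive semidefinite matrices ρ_x with trace 1, one for each x ∈ {0,1}^m, and 2ⁿ×2ⁿ matrices E_1, …, E_m with each E_i and I−E_i positive semidefinite, such that for every x ∈ {0,1}^m and every i ∈ {1,…,m}: Tr(E_i ρ_x) > 1/2 if x_i = 1, and 1 − Tr(E_i ρ_x) > 1/2 if x_i = 0. -/
open Matrix BigOperators ComplexOrder

namespace QRACaux

open Finset

noncomputable def σ : Fin 4 → Matrix (Fin 2) (Fin 2) ℂ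
  | 0 => !![1, 0; 0, 1]
  | 1 => !![0, 1; 1, 0]
  | 2 => !![0, -Complex.I; Complex.I, 0]
  | 3 => !![1, 0; 0, -1]

lemma σ_herm (a : Fin 4) : (σ a)ᴴ = σ a := by
  fin_cases a <;> ext i j <;> fin_cases i <;> fin_cases j <;>
    simp [σ, conjTranspose_apply, Complex.ext_iff]

lemma σ_sq (a : Fin 4) : σ a * σ a = 1 := by
  fin_cases a <;> ext i j <;> fin_cases i <;> fin_cases j <;>
    simp [σ, mul_apply, Fin.sum_univ_two, one_apply, Complex.ext_iff]

lemma σ_trace (a : Fin 4) (ha : a ≠ 0) : (σ a).trace = 0 := by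
  fin_cases a <;> simp_all [σ, trace_fin_two]

lemma σ_mul_trace_self (a : Fin 4) : (σ a * σ a).trace = 2 := by
  fin_cases a <;> simp [σ, trace_fin_two, mul_apply, Fin.sum_univ_two] <;> ring_nf <;>
    simp [Complex.I_sq, Complex.ext_iff]

lemma σ_mul_trace_ne (a b : Fin 4) (h : a ≠ b) : (σ a * σ b).trace = 0 := by
  fin_cases a <;> fin_cases b <;> simp_all [σ, trace_fin_two, mul_apply, Fin.sum_univ_two]

variable {n : ℕ}

noncomputable def P (f : Fin n → Fin 4) : Matrix (Fin n → Fin 2) (Fin n → Fin 2) ℂ :=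
  Matrix.of fun j k => ∏ i, σ (f i) (j i) (k i)

lemma trace_of_prod (M : Fin n → Matrix (Fin 2) (Fin 2) ℂ) :
    (Matrix.of fun j k : Fin n → Fin 2 => ∏ i, M i (j i) (k i)).trace = ∏ i, (M i).trace := by
  simp only [Matrix.trace, Matrix.diag_apply, Matrix.of_apply]
  exact (Fintype.prod_sum fun i c => M i c c).symm

lemma P_mul (f g : Fin n → Fin 4) :
    P f * P g = Matrix.of fun j k => ∏ i, (σ (f i) * σ (g i)) (j i) (k i) := by
  ext j k
  simp only [P, Matrix.mul_apply, Matrix.of_apply]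
  rw [Fintype.prod_sum]
  exact Finset.sum_congr rfl fun l _ => Finset.prod_mul_distrib.symm

lemma P_herm (f : Fin n → Fin 4) : (P f)ᴴ = P f := by
  ext j k
  simp only [conjTranspose_apply, P, Matrix.of_apply, star_prod]
  exact Finset.prod_congr rfl fun i _ => by
    rw [← conjTranspose_apply, σ_herm]

lemma P_sq (f : Fin n → Fin 4) : P f * P f = 1 := by
  rw [P_mul]
  ext j k
  simp only [Matrix.of_apply, σ_sq, Matrix.one_apply, Finset.prod_boole]
  by_cases h : j = k
  · simp [h]
  · simp [h, funext_iff]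
    exact Function.ne_iff.mp h

lemma P_trace (f : Fin n → Fin 4) (hf : f ≠ fun _ => 0) : (P f).trace = 0 := by
  rw [P, trace_of_prod]
  obtain ⟨i, hi⟩ := Function.ne_iff.mp hf
  exact Finset.prod_eq_zero (mem_univ i) (σ_trace _ hi)

lemma P_mul_trace_self (f : Fin n → Fin 4) : (P f * P f).trace = 2 ^ n := by
  rw [P_mul, trace_of_prod]
  simp [σ_mul_trace_self]

lemma P_mul_trace_ne (f g : Fin n → Fin 4) (h : f ≠ g) : (P f * P g).trace = 0 := by
  rw [P_mul, trace_of_prod]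
  obtain ⟨i, hi⟩ := Function.ne_iff.mp h
  exact Finset.prod_eq_zero (mem_univ i) (σ_mul_trace_ne _ _ hi)

variable {d : Type*} [Fintype d] [DecidableEq d]

lemma psd_smul_real {M : Matrix d d ℂ} (h : M.PosSemidef) {c : ℝ} (hc : 0 ≤ c) :
    (((c : ℂ)) • M).PosSemidef := by
  refine Matrix.PosSemidef.of_dotProduct_mulVec_nonneg ?_ ?_
  · unfold Matrix.IsHermitian
    rw [conjTranspose_smul, h.1]
    congr 1
    simp [Complex.ext_iff]
  · intro x
    rw [smul_mulVec, dotProduct_smul]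
    exact mul_nonneg (by exact_mod_cast Complex.zero_le_real.mpr hc) (h.dotProduct_mulVec_nonneg x)

lemma psd_one_add {P : Matrix d d ℂ} (hh : Pᴴ = P) (hs : P * P = 1) :
    ((1 : Matrix d d ℂ) + P).PosSemidef := by
  have key : ((1 : Matrix d d ℂ) + P) = (((2⁻¹ : ℝ) : ℂ)) • ((1 + P)ᴴ * (1 + P)) := by
    rw [conjTranspose_add, conjTranspose_one, hh]
    rw [add_mul, mul_add, mul_add, hs, one_mul, one_mul, mul_one]
    ext i j
    simp only [Matrix.add_apply, Matrix.smul_apply, smul_eq_mul]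
    push_cast
    ring
  rw [key]
  exact psd_smul_real (Matrix.posSemidef_conjTranspose_mul_self _) (by norm_num)

lemma psd_one_sub {P : Matrix d d ℂ} (hh : Pᴴ = P) (hs : P * P = 1) :
    ((1 : Matrix d d ℂ) - P).PosSemidef := by
  have h2 : (-P)ᴴ = -P := by rw [conjTranspose_neg, hh]
  have h3 : (-P) * (-P) = 1 := by rw [neg_mul_neg, hs]
  have := psd_one_add h2 h3
  rwa [← sub_eq_add_neg] at this

lemma psd_sum {ι : Type*} (s : Finset ι) (F : ι → Matrix d d ℂ)
    (h : ∀ i ∈ s, (F i).PosSemidef) : (∑ i ∈ s, F i).PosSemidef := by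
  classical
  induction s using Finset.induction_on with
  | empty => simpa using Matrix.PosSemidef.zero
  | insert _ _ hnot ih =>
    rename_i a s
    rw [Finset.sum_insert hnot]
    exact (h a (mem_insert_self a s)).add (ih fun i hi => h i (mem_insert_of_mem hi))

omit [DecidableEq d] in
lemma trace_submatrix_equiv' {m : Type*} [Fintype m] (e : m ≃ d)
    (M : Matrix d d ℂ) : (M.submatrix e e).trace = M.trace := by
  simp only [Matrix.trace, Matrix.diag_apply, Matrix.submatrix_apply]
  exact Fintype.sum_equiv e _ _ fun i => rfl

end QRACaux

open QRACaux

/-- Corollary: for every n ≥ 1 there exists a (2^{2n}−1, n, >1/2)-QRAC. -/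
theorem qrac_exists (n : ℕ) (hn : 1 ≤ n) :
    ∃ (ρ : (Fin (2 ^ (2 * n) - 1) → Bool) → Matrix (Fin (2 ^ n)) (Fin (2 ^ n)) ℂ)
      (E : Fin (2 ^ (2 * n) - 1) → Matrix (Fin (2 ^ n)) (Fin (2 ^ n)) ℂ),
      (∀ x, (ρ x).PosSemidef ∧ (ρ x).trace = 1) ∧
      (∀ i, (E i).PosSemidef ∧
        ((1 : Matrix (Fin (2 ^ n)) (Fin (2 ^ n)) ℂ) - E i).PosSemidef) ∧
      (∀ x i, (if x i then (E i * ρ x).trace.re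
               else 1 - (E i * ρ x).trace.re) > 1 / 2) := by
  classical
  set m : ℕ := 2 ^ (2 * n) - 1 with hm
  have h4 : 2 ^ (2 * n) = 4 ^ n := by rw [pow_mul]; norm_num
  have h4pos : 1 ≤ 4 ^ n := Nat.one_le_pow _ _ (by norm_num)
  -- the index map into nonzero Pauli strings
  have hlt : ∀ i : Fin m, (i : ℕ) + 1 < 4 ^ n := by
    intro i
    have := i.2
    omega
  set g : Fin m → (Fin n → Fin 4) :=
    fun i => finFunctionFinEquiv.symm ⟨(i : ℕ) + 1, hlt i⟩ with hg
  have hg_inj : Function.Injective g := by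
    intro i j hij
    have := finFunctionFinEquiv.symm.injective hij
    have : (i : ℕ) + 1 = (j : ℕ) + 1 := congrArg Fin.val this
    exact Fin.ext (by omega)
  have hg_ne : ∀ i, g i ≠ fun _ => 0 := by
    intro i h0
    have : finFunctionFinEquiv (g i) = finFunctionFinEquiv (fun _ : Fin n => (0 : Fin 4)) := by
      rw [h0]
    rw [hg] at this
    simp only [Equiv.apply_symm_apply] at this
    have hval : ((i : ℕ) + 1 : ℕ) = (finFunctionFinEquiv (fun _ : Fin n => (0 : Fin 4)) : ℕ) := by
      rw [← this]
    rw [finFunctionFinEquiv_apply] at hval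
    simp at hval
  -- parameters
  set c : ℝ := ((4 : ℝ) ^ n)⁻¹ with hc
  have hc_pos : 0 < c := by positivity
  have hm4 : (m : ℝ) ≤ (4 : ℝ) ^ n := by
    have h1 : (m : ℕ) ≤ 4 ^ n := by omega
    calc (m : ℝ) = ((m : ℕ) : ℝ) := rfl
      _ ≤ ((4 ^ n : ℕ) : ℝ) := by exact_mod_cast h1
      _ = (4 : ℝ) ^ n := by push_cast; ring
  have hcm : c * m ≤ 1 := by
    rw [hc, inv_mul_le_iff₀ (by positivity)]
    nlinarith
  set ε : (Fin m → Bool) → Fin m → ℝ := fun x j => if x j then 1 else -1 with hε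
  set T : (Fin m → Bool) → Matrix (Fin n → Fin 2) (Fin n → Fin 2) ℂ :=
    fun x => ∑ j, ((ε x j : ℝ) : ℂ) • P (g j) with hT
  set ρ' : (Fin m → Bool) → Matrix (Fin n → Fin 2) (Fin n → Fin 2) ℂ :=
    fun x => ((((2 : ℝ) ^ n)⁻¹ : ℝ) : ℂ) • (1 + ((c : ℝ) : ℂ) • T x) with hρ'
  set E' : Fin m → Matrix (Fin n → Fin 2) (Fin n → Fin 2) ℂ :=
    fun i => (((2⁻¹ : ℝ) : ℂ)) • (1 + P (g i)) with hE'
  -- basic facts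
  have hone_pm : ∀ (x : Fin m → Bool) (j : Fin m),
      ((1 : Matrix (Fin n → Fin 2) (Fin n → Fin 2) ℂ) + ((ε x j : ℝ) : ℂ) • P (g j)).PosSemidef := by
    intro x j
    by_cases h : x j
    · simp only [hε, h, if_true, Complex.ofReal_one, one_smul]
      exact psd_one_add (P_herm _) (P_sq _)
    · simp only [hε, h, if_false]
      push_cast
      rw [neg_smul, one_smul, ← sub_eq_add_neg]
      exact psd_one_sub (P_herm _) (P_sq _)
  have htraceT : ∀ x, (T x).trace = 0 := by
    intro x
    rw [hT]
    simp only [trace_sum, trace_smul]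
    refine Finset.sum_eq_zero fun j _ => ?_
    rw [P_trace _ (hg_ne j)]
    simp
  have htrace1 : (1 : Matrix (Fin n → Fin 2) (Fin n → Fin 2) ℂ).trace = (2 : ℂ) ^ n := by
    rw [Matrix.trace_one]
    simp [Fintype.card_fun]
  -- PSD and trace of ρ'
  have hρ_psd : ∀ x, (ρ' x).PosSemidef := by
    intro x
    rw [hρ']
    refine psd_smul_real ?_ (by positivity)
    have key : (1 : Matrix (Fin n → Fin 2) (Fin n → Fin 2) ℂ) + ((c : ℝ) : ℂ) • T x
        = (((1 - c * m : ℝ)) : ℂ) • 1 +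
          ((c : ℝ) : ℂ) • ∑ j : Fin m, (1 + ((ε x j : ℝ) : ℂ) • P (g j)) := by
      rw [Finset.sum_add_distrib, Finset.sum_const, Finset.card_univ, Fintype.card_fin]
      rw [smul_add]
      have hTx : (∑ j : Fin m, ((ε x j : ℝ) : ℂ) • P (g j)) = T x := rfl
      rw [hTx, ← add_assoc]
      congr 1
      rw [← Nat.cast_smul_eq_nsmul ℂ, smul_smul, ← add_smul]
      rw [show ((1 - c * m : ℝ) : ℂ) + (c : ℂ) * (m : ℂ) = 1 by push_cast; ring, one_smul]
    rw [key]
    refine Matrix.PosSemidef.add (psd_smul_real Matrix.PosSemidef.one (by nlinarith)) ?_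
    exact psd_smul_real (psd_sum _ _ fun j _ => hone_pm x j) (le_of_lt hc_pos)
  have hρ_trace : ∀ x, (ρ' x).trace = 1 := by
    intro x
    rw [hρ']
    rw [trace_smul, trace_add, trace_smul, htrace1, htraceT]
    simp only [smul_eq_mul, mul_zero, add_zero]
    push_cast
    exact inv_mul_cancel₀ (by positivity)
  -- measurement operators
  have hE_psd : ∀ i, (E' i).PosSemidef := fun i =>
    psd_smul_real (psd_one_add (P_herm _) (P_sq _)) (by norm_num)
  have hE_sub : ∀ i, ((1 : Matrix (Fin n → Fin 2) (Fin n → Fin 2) ℂ) - E' i).PosSemidef := by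
    intro i
    have key : (1 : Matrix (Fin n → Fin 2) (Fin n → Fin 2) ℂ) - E' i
        = ((2⁻¹ : ℝ) : ℂ) • (1 - P (g i)) := by
      rw [hE']
      ext a b
      simp only [Matrix.sub_apply, Matrix.smul_apply, Matrix.add_apply, smul_eq_mul]
      push_cast
      ring
    rw [key]
    exact psd_smul_real (psd_one_sub (P_herm _) (P_sq _)) (by norm_num)
  -- trace of P (g i) * T x
  have hPT : ∀ (x : Fin m → Bool) i, (P (g i) * T x).trace = ((ε x i : ℝ) : ℂ) * 2 ^ n := by
    intro x i
    have hTx : T x = ∑ j : Fin m, ((ε x j : ℝ) : ℂ) • P (g j) := rfl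
    rw [hTx, Finset.mul_sum]
    simp only [mul_smul_comm, trace_sum, trace_smul, smul_eq_mul]
    rw [Fintype.sum_eq_single i]
    · rw [P_mul_trace_self]
    · intro j hji
      rw [P_mul_trace_ne _ _ (fun h => hji (hg_inj h).symm), mul_zero]
  have htrE : ∀ (x : Fin m → Bool) i,
      (E' i * ρ' x).trace = (((1 + c * ε x i) / 2 : ℝ) : ℂ) := by
    intro x i
    have h1 : E' i * ρ' x = (Complex.ofReal (2⁻¹ : ℝ) * Complex.ofReal ((2 : ℝ) ^ n)⁻¹) •
        ((1 + P (g i)) * (1 + ((c : ℝ) : ℂ) • T x)) := by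
      rw [hE', hρ']
      rw [smul_mul_assoc, mul_smul_comm, smul_smul]
    rw [h1]
    rw [mul_add, add_mul, add_mul, one_mul, one_mul, mul_one, mul_smul_comm]
    rw [trace_smul, trace_add, trace_add, trace_add, trace_smul, trace_smul]
    rw [htrace1, htraceT, P_trace _ (hg_ne i), hPT]
    simp only [smul_eq_mul, mul_zero, add_zero, zero_add]
    push_cast
    have h2 : ((2 : ℂ) ^ n) ≠ 0 := by positivity
    field_simp
  -- transport along the equivalence
  set e : (Fin n → Fin 2) ≃ Fin (2 ^ n) := finFunctionFinEquiv with he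
  refine ⟨fun x => (ρ' x).submatrix e.symm e.symm,
    fun i => (E' i).submatrix e.symm e.symm, ?_, ?_, ?_⟩
  · intro x
    refine ⟨(Matrix.posSemidef_submatrix_equiv e.symm).mpr (hρ_psd x), ?_⟩
    rw [trace_submatrix_equiv' e.symm, hρ_trace]
  · intro i
    refine ⟨(Matrix.posSemidef_submatrix_equiv e.symm).mpr (hE_psd i), ?_⟩
    have key : (1 : Matrix (Fin (2 ^ n)) (Fin (2 ^ n)) ℂ) - (E' i).submatrix e.symm e.symm
        = ((1 : Matrix (Fin n → Fin 2) (Fin n → Fin 2) ℂ) - E' i).submatrix e.symm e.symm := by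
      ext a b
      simp [Matrix.submatrix_apply, Matrix.sub_apply, Matrix.one_apply,
        EmbeddingLike.apply_eq_iff_eq]
    rw [key]
    exact (Matrix.posSemidef_submatrix_equiv e.symm).mpr (hE_sub i)
  · intro x i
    have hmul : (E' i).submatrix e.symm e.symm * (ρ' x).submatrix e.symm e.symm
        = (E' i * ρ' x).submatrix e.symm e.symm := Matrix.submatrix_mul_equiv _ _ _ _ _
    rw [hmul, trace_submatrix_equiv', htrE]
    rw [Complex.ofReal_re]
    by_cases hxi : x i
    · have hε1 : ε x i = 1 := by simp [hε, hxi]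
      rw [if_pos hxi, hε1]
      linarith
    · have hε1 : ε x i = -1 := by simp [hε, hxi]
      rw [if_neg hxi, hε1]
      linarith
end

section
/- For every n ≥ 1 there is no (2^{2n}, n, >1/2)-QRAC: that is, setting m = 2^{2n}, for every family of 2ⁿ×2ⁿ complex positive semidefinite matrices ρ_x with trace 1 indexed by x ∈ {0,1}^m, and every family of 2ⁿ×2ⁿ matrices E_1, …, E_m with each E_i and I−E_i positive semidefinite, there exist x ∈ {0,1}^m and i ∈ {1,…,m} such that the success probability (Tr(E_i ρ_x) if x_i = 1, and 1 − Tr(E_i ρ_x) if x_i = 0) is at most 1/2. -/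
open Matrix BigOperators ComplexOrder

/-- Corollary: for every n ≥ 1 there is no (2^{2n}, n, >1/2)-QRAC. -/
theorem qrac_not_exists (n : ℕ) (hn : 1 ≤ n)
    (ρ : (Fin (2 ^ (2 * n)) → Bool) → Matrix (Fin (2 ^ n)) (Fin (2 ^ n)) ℂ)
    (E : Fin (2 ^ (2 * n)) → Matrix (Fin (2 ^ n)) (Fin (2 ^ n)) ℂ)
    (hρ : ∀ x, (ρ x).PosSemidef ∧ (ρ x).trace = 1)
    (hE : ∀ i, (E i).PosSemidef ∧
      ((1 : Matrix (Fin (2 ^ n)) (Fin (2 ^ n)) ℂ) - E i).PosSemidef) :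
    ∃ (x : Fin (2 ^ (2 * n)) → Bool) (i : Fin (2 ^ (2 * n))),
      (if x i then (E i * ρ x).trace.re
       else 1 - (E i * ρ x).trace.re) ≤ 1 / 2 := by
  by_contra hcon
  push_neg at hcon
  -- success "gap" statement
  have hq : ∀ (x : Fin (2 ^ (2 * n)) → Bool) i,
      if x i then 0 < (E i * ρ x).trace.re - 1/2
      else (E i * ρ x).trace.re - 1/2 < 0 := by
    intro x i
    have := hcon x i
    by_cases h : x i <;> simp [h] at this ⊢ <;> linarith
  -- the family {1, E i - 1/2}
  set G : Option (Fin (2 ^ (2 * n))) → Matrix (Fin (2 ^ n)) (Fin (2 ^ n)) ℂ :=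
    fun j => j.elim 1 (fun i => E i - (1/2 : ℂ) • 1) with hGdef
  -- linear dependence over ℂ
  have hdep : ¬ LinearIndependent ℂ G := by
    intro hli
    have hcard := hli.fintype_card_le_finrank
    rw [Module.finrank_matrix] at hcard
    simp only [Fintype.card_option, Fintype.card_fin, Module.finrank_self, mul_one] at hcard
    have : 2 ^ (2 * n) = 2 ^ n * 2 ^ n := by rw [two_mul, pow_add]
    omega
  rw [Fintype.not_linearIndependent_iff] at hdep
  obtain ⟨γ, hsum, j₀, hj₀⟩ := hdep
  -- each G j is Hermitian
  have hGH : ∀ j, (G j)ᴴ = G j := by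
    rintro (_ | i)
    · simp [hGdef]
    · have h1 : (E i)ᴴ = E i := (hE i).1.isHermitian
      simp [hGdef, conjTranspose_sub, conjTranspose_smul, h1]
  -- each ρ x is Hermitian
  have hρH : ∀ x, (ρ x)ᴴ = ρ x := fun x => (hρ x).1.isHermitian
  -- the traces (G j * ρ x).trace are real
  have him : ∀ j x, ((G j * ρ x).trace).im = 0 := by
    intro j x
    have : star ((G j * ρ x).trace) = (G j * ρ x).trace := by
      rw [← trace_conjTranspose, conjTranspose_mul, hGH j, hρH x, trace_mul_comm]
    have := congrArg Complex.im this
    simp at this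
    linarith
  -- the complex linear relation evaluated on states
  have h1 : ∀ x, ∑ j, γ j * (G j * ρ x).trace = 0 := by
    intro x
    have h0 : ((∑ j, γ j • G j) * ρ x).trace = 0 := by rw [hsum, zero_mul, trace_zero]
    rw [Finset.sum_mul] at h0
    rw [trace_sum] at h0
    simpa [smul_mul_assoc, trace_smul, smul_eq_mul] using h0
  -- real and imaginary relations
  have h2re : ∀ x, ∑ j, (γ j).re * ((G j * ρ x).trace).re = 0 := by
    intro x
    have := congrArg Complex.re (h1 x)
    rw [Complex.re_sum] at this
    simpa [Complex.mul_re, him] using this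
  have h2im : ∀ x, ∑ j, (γ j).im * ((G j * ρ x).trace).re = 0 := by
    intro x
    have := congrArg Complex.im (h1 x)
    rw [Complex.im_sum] at this
    simpa [Complex.mul_im, him] using this
  -- explicit trace values
  have hTnone : ∀ x, ((G none * ρ x).trace).re = 1 := by
    intro x
    simp [hGdef, (hρ x).2]
  have hTsome : ∀ i x, ((G (some i) * ρ x).trace).re = (E i * ρ x).trace.re - 1/2 := by
    intro i x
    have : (G (some i) * ρ x).trace = (E i * ρ x).trace - (1/2 : ℂ) * (ρ x).trace := by
      simp [hGdef, sub_mul, trace_sub, smul_mul_assoc, trace_smul, smul_eq_mul]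
    rw [this, (hρ x).2]
    simp
  -- key sign argument: any real relation forces all coefficients to vanish
  have keyA : ∀ c : Option (Fin (2 ^ (2 * n))) → ℝ,
      (∀ x, ∑ j, c j * ((G j * ρ x).trace).re = 0) → ∀ j, c j = 0 := by
    intro c hc
    -- rewrite the relation
    have hc' : ∀ x, c none + ∑ i, c (some i) * ((E i * ρ x).trace.re - 1/2) = 0 := by
      intro x
      have := hc x
      rw [Fintype.sum_option] at this
      simpa [hTnone, hTsome] using this
    set xp : Fin (2 ^ (2 * n)) → Bool := fun i => decide (0 < c (some i)) with hxp
    set xm : Fin (2 ^ (2 * n)) → Bool := fun i => decide (c (some i) < 0) with hxm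
    have hp : ∀ i, 0 ≤ c (some i) * ((E i * ρ xp).trace.re - 1/2) := by
      intro i
      have hqi := hq xp i
      rcases lt_trichotomy (c (some i)) 0 with h | h | h
      · have hx : xp i = false := by simp [hxp]; linarith
        rw [hx] at hqi; simp at hqi
        nlinarith
      · simp [h]
      · have hx : xp i = true := by simp [hxp, h]
        rw [hx] at hqi; simp at hqi
        nlinarith
    have hm : ∀ i, c (some i) * ((E i * ρ xm).trace.re - 1/2) ≤ 0 := by
      intro i
      have hqi := hq xm i
      rcases lt_trichotomy (c (some i)) 0 with h | h | h
      · have hx : xm i = true := by simp [hxm, h]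
        rw [hx] at hqi; simp at hqi
        nlinarith
      · simp [h]
      · have hx : xm i = false := by simp [hxm]; linarith
        rw [hx] at hqi; simp at hqi
        nlinarith
    have hsp : 0 ≤ ∑ i, c (some i) * ((E i * ρ xp).trace.re - 1/2) :=
      Finset.sum_nonneg fun i _ => hp i
    have hsm : ∑ i, c (some i) * ((E i * ρ xm).trace.re - 1/2) ≤ 0 :=
      Finset.sum_nonpos fun i _ => hm i
    have hnone : c none = 0 := by
      have e1 := hc' xp
      have e2 := hc' xm
      linarith
    have hzero : ∀ i, c (some i) * ((E i * ρ xp).trace.re - 1/2) = 0 := by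
      have e1 := hc' xp
      have : ∑ i, c (some i) * ((E i * ρ xp).trace.re - 1/2) = 0 := by linarith
      intro i
      exact (Finset.sum_eq_zero_iff_of_nonneg (fun i _ => hp i)).mp this i (Finset.mem_univ i)
    rintro (_ | i)
    · exact hnone
    · have := hzero i
      have hqi := hq xp i
      rcases mul_eq_zero.mp this with h | h
      · exact h
      · exfalso
        by_cases hx : xp i = true
        · rw [if_pos hx] at hqi; linarith
        · rw [if_neg hx] at hqi; linarith
  -- conclude
  have hre := keyA (fun j => (γ j).re) h2re
  have himz := keyA (fun j => (γ j).im) h2im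
  apply hj₀
  exact Complex.ext (hre j₀) (himz j₀)
end

section
/- For every n ≥ 1 there exists a (2^n−1, n, >1/2)-RAC: that is, setting m = 2^n−1, there exist, for each x ∈ {0,1}^m, a probability distribution e_x over the 2^n messages s ∈ {0,1}^n, and decoding functions D_i : {0,1}^n → [0,1] for i ∈ {1,…,m}, such that for every x ∈ {0,1}^m and every i ∈ {1,…,m} the success probability Σ_s e_x(s)·(D_i(s) if x_i = 1, else 1 − D_i(s)) is strictly greater than 1/2. -/
open BigOperators

noncomputable section RACaux

/-- Character of (Z/2)^n at `u` evaluated at `s`. -/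
def racChi (n : ℕ) (u s : Fin n → Bool) : ℝ := ∏ i, if u i && s i then -1 else 1

lemma racChi_abs (n : ℕ) (u s : Fin n → Bool) : |racChi n u s| = 1 := by
  rw [racChi, Finset.abs_prod]
  apply Finset.prod_eq_one
  intro i _
  by_cases h : u i && s i <;> simp [h]

lemma racChi_mul (n : ℕ) (u v s : Fin n → Bool) :
    racChi n u s * racChi n v s = racChi n (fun i => xor (u i) (v i)) s := by
  rw [racChi, racChi, racChi, ← Finset.prod_mul_distrib]
  apply Finset.prod_congr rfl
  intro i _
  cases hu : u i <;> cases hv : v i <;> cases hs : s i <;> norm_num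

lemma racChi_sum (n : ℕ) (u : Fin n → Bool) :
    ∑ s : Fin n → Bool, racChi n u s =
      if u = (fun _ => false) then (2 : ℝ) ^ n else 0 := by
  have h2 : (∏ i : Fin n, ∑ b : Bool, (if u i && b then (-1 : ℝ) else 1))
      = ∑ s : Fin n → Bool, racChi n u s := by
    rw [Finset.prod_univ_sum (fun _ : Fin n => (Finset.univ : Finset Bool))
      (fun i b => if u i && b then (-1 : ℝ) else 1), Fintype.piFinset_univ]
    rfl
  rw [← h2]
  by_cases hu : u = (fun _ => false)
  · subst hu
    simp
  · rw [if_neg hu]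
    have : ∃ i, u i = true := by
      by_contra h
      push_neg at h
      exact hu (funext fun i => by simpa using h i)
    obtain ⟨i, hi⟩ := this
    apply Finset.prod_eq_zero (Finset.mem_univ i)
    simp [hi]

lemma racChi_orth (n : ℕ) (u v : Fin n → Bool) :
    ∑ s : Fin n → Bool, racChi n u s * racChi n v s =
      if u = v then (2 : ℝ) ^ n else 0 := by
  have : ∀ s, racChi n u s * racChi n v s = racChi n (fun i => xor (u i) (v i)) s :=
    racChi_mul n u v
  rw [Finset.sum_congr rfl (fun s _ => this s), racChi_sum]
  congr 1
  simp only [funext_iff, eq_iff_iff]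
  constructor <;> intro h i <;> have := h i <;>
    revert this <;> cases u i <;> cases v i <;> simp

/-- Encoding of index `i` as nonzero bit vector: bits of `i+1`. -/
def racV (n : ℕ) (i : Fin (2 ^ n - 1)) : Fin n → Bool := fun j => Nat.testBit ((i : ℕ) + 1) j

lemma racV_lt (n : ℕ) (i : Fin (2 ^ n - 1)) : (i : ℕ) + 1 < 2 ^ n := by
  have := i.isLt
  have h2 : 1 ≤ 2 ^ n := Nat.one_le_two_pow
  omega

lemma racV_ne (n : ℕ) (i : Fin (2 ^ n - 1)) : racV n i ≠ (fun _ => false) := by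
  intro h
  have : (i : ℕ) + 1 = 0 := by
    apply Nat.eq_of_testBit_eq
    intro j
    simp only [Nat.zero_testBit]
    by_cases hj : j < n
    · exact congrFun h ⟨j, hj⟩
    · apply Nat.testBit_lt_two_pow
      calc (i : ℕ) + 1 < 2 ^ n := racV_lt n i
        _ ≤ 2 ^ j := Nat.pow_le_pow_right (by norm_num) (by omega)
  omega

lemma racV_inj (n : ℕ) : Function.Injective (racV n) := by
  intro i i' h
  have : (i : ℕ) + 1 = (i' : ℕ) + 1 := by
    apply Nat.eq_of_testBit_eq
    intro j
    by_cases hj : j < n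
    · exact congrFun h ⟨j, hj⟩
    · have h1 : Nat.testBit ((i : ℕ) + 1) j = false := by
        apply Nat.testBit_lt_two_pow
        calc (i : ℕ) + 1 < 2 ^ n := racV_lt n i
          _ ≤ 2 ^ j := Nat.pow_le_pow_right (by norm_num) (by omega)
      have h2 : Nat.testBit ((i' : ℕ) + 1) j = false := by
        apply Nat.testBit_lt_two_pow
        calc (i' : ℕ) + 1 < 2 ^ n := racV_lt n i'
          _ ≤ 2 ^ j := Nat.pow_le_pow_right (by norm_num) (by omega)
      rw [h1, h2]
  exact Fin.ext (by omega)

end RACaux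

/-- Corollary: for every n ≥ 1 there exists a (2^n−1, n, >1/2)-RAC. -/
theorem rac_exists (n : ℕ) (hn : 1 ≤ n) :
    ∃ (e : (Fin (2 ^ n - 1) → Bool) → (Fin n → Bool) → ℝ)
      (D : Fin (2 ^ n - 1) → (Fin n → Bool) → ℝ),
      (∀ x s, 0 ≤ e x s) ∧ (∀ x, ∑ s, e x s = 1) ∧
      (∀ i s, 0 ≤ D i s ∧ D i s ≤ 1) ∧
      (∀ x i, (∑ s, e x s * (if x i then D i s else 1 - D i s)) > 1 / 2) := by
  classical
  set P : ℝ := (2 : ℝ) ^ n with hP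
  have hPpos : 0 < P := by positivity
  have hPne : P ≠ 0 := ne_of_gt hPpos
  have hinv : P⁻¹ * P = 1 := inv_mul_cancel₀ hPne
  have hcard : (Fintype.card (Fin (2 ^ n - 1)) : ℝ) = P - 1 := by
    have h2 : 1 ≤ 2 ^ n := Nat.one_le_two_pow
    simp only [Fintype.card_fin]
    push_cast [Nat.cast_sub h2]
    norm_num [hP]
  have hcards : ∑ s : Fin n → Bool, (1:ℝ) = P := by
    rw [Finset.sum_const, Finset.card_univ, nsmul_eq_mul, mul_one]
    simp [hP]
  -- the encoding
  refine ⟨fun x s => P⁻¹ * (1 + P⁻¹ * ∑ j, (if x j then 1 else -1) * racChi n (racV n j) s),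
    fun i s => (1 + racChi n (racV n i) s) / 2, ?_, ?_, ?_, ?_⟩
  · -- nonnegativity
    intro x s
    have hbound : |∑ j, (if x j then (1:ℝ) else -1) * racChi n (racV n j) s| ≤ P - 1 := by
      calc |∑ j, (if x j then (1:ℝ) else -1) * racChi n (racV n j) s|
          ≤ ∑ j, |(if x j then (1:ℝ) else -1) * racChi n (racV n j) s| :=
            Finset.abs_sum_le_sum_abs _ _
        _ = ∑ j : Fin (2 ^ n - 1), 1 := by
            apply Finset.sum_congr rfl
            intro j _
            rw [abs_mul, racChi_abs]
            by_cases h : x j <;> simp [h]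
        _ = P - 1 := by rw [Finset.sum_const, Finset.card_univ, nsmul_eq_mul, mul_one, hcard]
    have h1 : -(P - 1) ≤ ∑ j, (if x j then (1:ℝ) else -1) * racChi n (racV n j) s :=
      neg_le_of_abs_le hbound
    have h2 : P⁻¹ * (P - 1) ≤ 1 := by
      rw [inv_mul_le_iff₀ hPpos]; linarith
    have h3 : P⁻¹ * -(P - 1) ≤ P⁻¹ * ∑ j, (if x j then (1:ℝ) else -1) * racChi n (racV n j) s :=
      mul_le_mul_of_nonneg_left h1 (le_of_lt (inv_pos.mpr hPpos))
    have : (0:ℝ) ≤ 1 + P⁻¹ * ∑ j, (if x j then (1:ℝ) else -1) * racChi n (racV n j) s := by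
      rw [mul_neg] at h3
      linarith
    positivity
  · -- sums to one
    intro x
    have hin : ∑ s : Fin n → Bool,
        ∑ j, (if x j then (1:ℝ) else -1) * racChi n (racV n j) s = 0 := by
      rw [Finset.sum_comm]
      apply Finset.sum_eq_zero
      intro j _
      rw [← Finset.mul_sum, racChi_sum, if_neg (racV_ne n j), mul_zero]
    calc ∑ s, P⁻¹ * (1 + P⁻¹ * ∑ j, (if x j then (1:ℝ) else -1) * racChi n (racV n j) s)
        = P⁻¹ * ∑ s, (1 + P⁻¹ * ∑ j, (if x j then (1:ℝ) else -1) * racChi n (racV n j) s) :=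
          (Finset.mul_sum _ _ _).symm
      _ = P⁻¹ * ((∑ s : Fin n → Bool, (1:ℝ)) +
            P⁻¹ * ∑ s, ∑ j, (if x j then (1:ℝ) else -1) * racChi n (racV n j) s) := by
          rw [Finset.sum_add_distrib, ← Finset.mul_sum]
      _ = 1 := by rw [hin, mul_zero, add_zero, hcards, inv_mul_cancel₀ hPne]
  · -- decoder bounds
    intro i s
    have h := racChi_abs n (racV n i) s
    have h1 : -1 ≤ racChi n (racV n i) s := neg_le_of_abs_le h.le
    have h2 : racChi n (racV n i) s ≤ 1 := le_of_abs_le h.le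
    constructor <;> [linarith; linarith]
  · -- success probability
    intro x i
    set a : Fin (2 ^ n - 1) → ℝ := fun j => if x j then 1 else -1 with ha
    have ha2 : a i * a i = 1 := by by_cases h : x i <;> simp [ha, h]
    have hdec : ∀ s, (if x i then (1 + racChi n (racV n i) s) / 2
        else 1 - (1 + racChi n (racV n i) s) / 2) = (1 + a i * racChi n (racV n i) s) / 2 := by
      intro s
      by_cases h : x i
      · simp [ha, h]
      · simp [ha, h]
        ring
    have key : ∑ s, (P⁻¹ * (1 + P⁻¹ * ∑ j, a j * racChi n (racV n j) s)) *
        ((1 + a i * racChi n (racV n i) s) / 2) = 1 / 2 + P⁻¹ / 2 := by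
      have expand : ∀ s : Fin n → Bool,
          (P⁻¹ * (1 + P⁻¹ * ∑ j, a j * racChi n (racV n j) s)) *
            ((1 + a i * racChi n (racV n i) s) / 2)
          = P⁻¹ / 2 * 1
            + P⁻¹ / 2 * a i * racChi n (racV n i) s
            + P⁻¹ / 2 * P⁻¹ * (∑ j, a j * racChi n (racV n j) s)
            + P⁻¹ / 2 * P⁻¹ * a i *
                (∑ j, a j * (racChi n (racV n j) s * racChi n (racV n i) s)) := by
        intro s
        have hS : (∑ j, a j * (racChi n (racV n j) s * racChi n (racV n i) s))
            = (∑ j, a j * racChi n (racV n j) s) * racChi n (racV n i) s := by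
          rw [Finset.sum_mul]
          apply Finset.sum_congr rfl
          intro j _
          ring
        rw [hS]
        ring
      have t2 : ∑ s : Fin n → Bool, P⁻¹ / 2 * a i * racChi n (racV n i) s = 0 := by
        rw [← Finset.mul_sum, racChi_sum, if_neg (racV_ne n i), mul_zero]
      have t3 : ∑ s : Fin n → Bool, ∑ j, a j * racChi n (racV n j) s = 0 := by
        rw [Finset.sum_comm]
        apply Finset.sum_eq_zero
        intro j _
        rw [← Finset.mul_sum, racChi_sum, if_neg (racV_ne n j), mul_zero]
      have t4 : ∑ s : Fin n → Bool, ∑ j, a j * (racChi n (racV n j) s * racChi n (racV n i) s)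
          = a i * P := by
        rw [Finset.sum_comm]
        have h5 : ∀ j : Fin (2 ^ n - 1),
            ∑ s : Fin n → Bool, a j * (racChi n (racV n j) s * racChi n (racV n i) s)
            = a j * if racV n j = racV n i then P else 0 := by
          intro j
          rw [← Finset.mul_sum, racChi_orth]
        rw [Finset.sum_congr rfl (fun j _ => h5 j)]
        have h6 : ∀ j : Fin (2 ^ n - 1),
            (a j * if racV n j = racV n i then P else 0) = if j = i then a j * P else 0 := by
          intro j
          by_cases h : j = i
          · subst h; simp
          · rw [if_neg h, if_neg (fun hv => h (racV_inj n hv)), mul_zero]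
        rw [Finset.sum_congr rfl (fun j _ => h6 j), Finset.sum_ite_eq' Finset.univ i]
        simp
      have e1 : ∑ _s : Fin n → Bool, P⁻¹ / 2 * (1:ℝ) = P⁻¹ / 2 * P := by
        rw [← Finset.mul_sum, hcards]
      have e3 : ∑ s : Fin n → Bool,
          P⁻¹ / 2 * P⁻¹ * (∑ j, a j * racChi n (racV n j) s) = 0 := by
        rw [← Finset.mul_sum, t3, mul_zero]
      have e4 : ∑ s : Fin n → Bool, P⁻¹ / 2 * P⁻¹ * a i *
          (∑ j, a j * (racChi n (racV n j) s * racChi n (racV n i) s))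
          = P⁻¹ / 2 * P⁻¹ * a i * (a i * P) := by
        rw [← Finset.mul_sum, t4]
      rw [Finset.sum_congr rfl (fun s _ => expand s),
        Finset.sum_add_distrib, Finset.sum_add_distrib, Finset.sum_add_distrib,
        e1, t2, e3, e4]
      linear_combination (1/2 + P⁻¹ * (a i * a i) / 2) * hinv + (P⁻¹ / 2) * ha2
    have key2 : (∑ s, P⁻¹ * (1 + P⁻¹ * ∑ j, a j * racChi n (racV n j) s) *
        (if x i then (1 + racChi n (racV n i) s) / 2
          else 1 - (1 + racChi n (racV n i) s) / 2)) = 1 / 2 + P⁻¹ / 2 := by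
      rw [← key]
      apply Finset.sum_congr rfl
      intro s _
      rw [hdec s]
    rw [key2]
    have : 0 < P⁻¹ / 2 := by positivity
    linarith
end

section
/- For every n ≥ 1 there exists a (2^{2n}−1, n, p)-QRAC with p ≥ 1/2 + 1/(2·√((2^n−1)(2^{2n}−1))): that is, setting m = 2^{2n}−1, there exist 2ⁿ×2ⁿ complex positive semidefinite matrices ρ_x with trace 1 for each x ∈ {0,1}^m, and 2ⁿ×2ⁿ matrices E_1, …, E_m with each E_i and I−E_i positive semidefinite, such that for every x ∈ {0,1}^m and every i ∈ {1,…,m} the success probability (Tr(E_i ρ_x) if x_i = 1, and 1 − Tr(E_i ρ_x) if x_i = 0) is at least 1/2 + 1/(2·√((2^n−1)(2^{2n}−1))). -/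
open Matrix BigOperators ComplexOrder

namespace QracAux
variable {n : ℕ}

abbrev V (n : ℕ) := Fin n → ZMod 2

lemma zmod2_eq_one {z : ZMod 2} (h : z ≠ 0) : z = 1 := by revert h; revert z; decide

lemma vadd_self (a : V n) : a + a = 0 := by
  funext i; have : ∀ z : ZMod 2, z + z = 0 := by decide
  exact this (a i)

lemma eq_add_comm {j k a : V n} : j = k + a ↔ k = j + a := by
  constructor <;> rintro rfl <;> rw [add_assoc, vadd_self, add_zero]

def chi (z : ZMod 2) : ℂ := if z = 0 then 1 else -1

lemma chi_add (u v : ZMod 2) : chi (u + v) = chi u * chi v := by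
  rcases (show u = 0 ∨ u = 1 by revert u; decide) with rfl | rfl <;>
    rcases (show v = 0 ∨ v = 1 by revert v; decide) with rfl | rfl <;>
    simp [chi, show (1 + 1 : ZMod 2) = 0 from rfl, show (1 : ZMod 2) ≠ 0 by decide]

lemma chi_zero : chi 0 = 1 := rfl
lemma chi_one : chi 1 = -1 := rfl

def dot (a b : V n) : ZMod 2 := ∑ i, a i * b i

lemma dot_comm (a b : V n) : dot a b = dot b a := by
  unfold dot; exact Finset.sum_congr rfl fun i _ => mul_comm _ _

lemma dot_add_right (b k a : V n) : dot b (k + a) = dot b k + dot b a := by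
  unfold dot; rw [← Finset.sum_add_distrib]
  exact Finset.sum_congr rfl fun i _ => by simp [Pi.add_apply, mul_add]

lemma dot_add_left (b b' k : V n) : dot (b + b') k = dot b k + dot b' k := by
  rw [dot_comm, dot_add_right, dot_comm k b, dot_comm k b']

lemma dot_zero_left (k : V n) : dot 0 k = 0 := by simp [dot]

lemma sum_chi {b : V n} (hb : b ≠ 0) : ∑ k : V n, chi (dot b k) = 0 := by
  obtain ⟨i0, hi0⟩ := Function.ne_iff.mp hb
  set u : V n := Pi.single i0 1 with hu
  have hdu : dot b u = 1 := by
    unfold dot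
    rw [Finset.sum_eq_single i0]
    · rw [hu, Pi.single_eq_same, mul_one, zmod2_eq_one hi0]
    · intro i _ hne; rw [hu, Pi.single_eq_of_ne hne, mul_zero]
    · intro h; exact absurd (Finset.mem_univ i0) h
  have key : ∑ k : V n, chi (dot b k) = ∑ k : V n, chi (dot b (k + u)) :=
    Fintype.sum_equiv (Equiv.addRight u) _ _ (fun k => rfl) |>.symm
  have : ∑ k : V n, chi (dot b (k + u)) = -∑ k : V n, chi (dot b k) := by
    rw [← Finset.sum_neg_distrib]
    refine Finset.sum_congr rfl fun k _ => ?_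
    rw [dot_add_right, chi_add, hdu, chi_one]; ring
  have h2 : ∑ k : V n, chi (dot b k) = -∑ k : V n, chi (dot b k) := key.trans this
  linear_combination h2 / 2


lemma add_eq_zero_iff' {a b : V n} : a + b = 0 ↔ a = b := by
  constructor
  · intro hc; rw [← add_zero a, ← vadd_self b, ← add_assoc, hc, zero_add]
  · rintro rfl; exact vadd_self a

def ph (a b : V n) : ℂ := if dot a b = 0 then 1 else Complex.I

def P (a b : V n) : Matrix (V n) (V n) ℂ :=
  Matrix.of fun j k => if j = k + a then ph a b * chi (dot b k) else 0

lemma P_mul (a b a' b' : V n) : P a b * P a' b' =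
    Matrix.of fun j l => if j = l + a' + a
      then ph a b * ph a' b' * (chi (dot b (l + a')) * chi (dot b' l)) else 0 := by
  ext j l
  simp only [Matrix.mul_apply, P, Matrix.of_apply]
  rw [Finset.sum_eq_single (l + a')]
  · rw [if_pos rfl]
    by_cases h : j = l + a' + a
    · rw [if_pos h, if_pos h]; ring
    · rw [if_neg h, if_neg h, zero_mul]
  · intro k _ hk; rw [if_neg hk, mul_zero]
  · intro h; exact absurd (Finset.mem_univ _) h

lemma ph_mul_ph_mul_chi (a b : V n) : ph a b * ph a b * chi (dot b a) = 1 := by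
  rcases eq_or_ne (dot a b) 0 with h | h
  · rw [ph, if_pos h, dot_comm b a, h, chi_zero]; ring
  · rw [ph, if_neg h, dot_comm b a, zmod2_eq_one h, chi_one, Complex.I_mul_I]; ring

lemma chi_mul_chi (z : ZMod 2) : chi z * chi z = 1 := by
  rcases (show z = 0 ∨ z = 1 by revert z; decide) with rfl | rfl <;>
    simp [chi, show (1 : ZMod 2) ≠ 0 by decide]

lemma key_one (a b l : V n) :
    ph a b * ph a b * (chi (dot b (l + a)) * chi (dot b l)) = 1 := by
  rw [dot_add_right, chi_add]
  linear_combination (ph a b * ph a b * chi (dot b a)) * chi_mul_chi (dot b l)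
    + ph_mul_ph_mul_chi a b

lemma P_mul_self (a b : V n) : P a b * P a b = 1 := by
  rw [P_mul]
  ext j l
  simp only [Matrix.of_apply, vadd_self, add_assoc, add_zero, Matrix.one_apply]
  by_cases h : j = l
  · rw [if_pos h, if_pos h, key_one]
  · rw [if_neg h, if_neg h]

lemma star_chi (z : ZMod 2) : star (chi z) = chi z := by
  rcases (show z = 0 ∨ z = 1 by revert z; decide) with rfl | rfl <;>
    simp [chi, show (1 : ZMod 2) ≠ 0 by decide]

lemma P_herm (a b : V n) : (P a b)ᴴ = P a b := by
  ext j k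
  simp only [Matrix.conjTranspose_apply, P, Matrix.of_apply]
  by_cases h : j = k + a
  · rw [if_pos (eq_add_comm.mp h), if_pos h]
    have hjk : dot b j = dot b k + dot b a := by rw [h, dot_add_right]
    rw [hjk, chi_add, star_mul', star_mul', star_chi, star_chi]
    rcases eq_or_ne (dot a b) 0 with h0 | h0
    · rw [ph, if_pos h0, dot_comm b a, h0, chi_zero, star_one]; ring
    · rw [ph, if_neg h0, dot_comm b a, zmod2_eq_one h0, chi_one, Complex.star_def,
        Complex.conj_I]; ring
  · rw [if_neg (fun hk => h (eq_add_comm.mpr hk)), if_neg h, star_zero]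

lemma card_V : Fintype.card (V n) = 2 ^ n := by
  simp [Fintype.card_fun]

lemma trace_P {a b : V n} (h : ¬(a = 0 ∧ b = 0)) : (P a b).trace = 0 := by
  unfold Matrix.trace Matrix.diag
  rcases eq_or_ne a 0 with ha | ha
  · subst ha
    have hb : b ≠ 0 := fun hb => h ⟨rfl, hb⟩
    have hP : ∀ j : V n, P 0 b j j = chi (dot b j) := by
      intro j
      simp only [P, Matrix.of_apply, add_zero, eq_self_iff_true, if_true]
      rw [ph, if_pos (dot_zero_left b), one_mul]
    simp only [hP]
    exact sum_chi hb
  · have hP : ∀ j : V n, P a b j j = 0 := by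
      intro j
      simp only [P, Matrix.of_apply]
      exact if_neg (fun hj => ha (left_eq_add.mp hj))
    simp only [hP, Finset.sum_const_zero]

lemma trace_P_mul (a b a' b' : V n) :
    (P a b * P a' b').trace = if a = a' ∧ b = b' then (2 ^ n : ℂ) else 0 := by
  rw [P_mul]
  unfold Matrix.trace Matrix.diag
  rcases eq_or_ne a a' with ha | ha
  · subst ha
    simp only [Matrix.of_apply, add_assoc, vadd_self, add_zero, eq_self_iff_true, if_true,
      true_and]
    rcases eq_or_ne b b' with hb | hb
    · subst hb
      simp only [if_pos rfl, key_one, Finset.sum_const, Finset.card_univ, card_V,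
        nsmul_eq_mul, mul_one]
      norm_num
    · rw [if_neg hb]
      have hrw : ∀ l : V n, ph a b * ph a b' * (chi (dot b (l + a)) * chi (dot b' l)) =
          (ph a b * ph a b' * chi (dot b a)) * chi (dot (b + b') l) := by
        intro l
        rw [dot_add_right, chi_add, dot_add_left, chi_add]; ring
      simp only [hrw, ← Finset.mul_sum]
      rw [sum_chi (fun hc => hb (add_eq_zero_iff'.mp hc)), mul_zero]
  · rw [if_neg (fun hc => ha hc.1)]
    have hz : ∀ l : V n, (if l = l + a' + a then ph a b * ph a' b' *
        (chi (dot b (l + a')) * chi (dot b' l)) else 0) = 0 := by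
      intro l
      refine if_neg (fun hl => ha ?_)
      rw [add_assoc] at hl
      exact (add_eq_zero_iff'.mp (left_eq_add.mp hl)).symm
    simp only [Matrix.of_apply, hz, Finset.sum_const_zero]


variable {ι : Type*} [Fintype ι] [DecidableEq ι]

lemma trace_eq_sum_eigen (M : Matrix ι ι ℂ) (hM : M.IsHermitian) :
    M.trace = ∑ i, (hM.eigenvalues i : ℂ) := by
  set U : Matrix ι ι ℂ := (hM.eigenvectorUnitary : Matrix ι ι ℂ) with hUdef
  have hsp : M = U * Matrix.diagonal (RCLike.ofReal ∘ hM.eigenvalues) * star U := hM.spectral_theorem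
  have hU : star U * U = 1 := Matrix.mem_unitaryGroup_iff'.mp hM.eigenvectorUnitary.2
  calc M.trace = (U * Matrix.diagonal (RCLike.ofReal ∘ hM.eigenvalues) * star U).trace := by
        rw [← hsp]
    _ = (star U * U * Matrix.diagonal (RCLike.ofReal ∘ hM.eigenvalues)).trace := by
        rw [Matrix.trace_mul_cycle]
    _ = ∑ i, (hM.eigenvalues i : ℂ) := by
        rw [hU, one_mul, Matrix.trace_diagonal]; rfl

lemma trace_sq_eq_sum_eigen_sq (M : Matrix ι ι ℂ) (hM : M.IsHermitian) :
    (M * M).trace = ∑ i, ((hM.eigenvalues i : ℂ))^2 := by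
  set U : Matrix ι ι ℂ := (hM.eigenvectorUnitary : Matrix ι ι ℂ) with hUdef
  set D : Matrix ι ι ℂ := Matrix.diagonal (RCLike.ofReal ∘ hM.eigenvalues) with hDdef
  have hsp : M = U * Matrix.diagonal (RCLike.ofReal ∘ hM.eigenvalues) * star U := hM.spectral_theorem
  have hU : star U * U = 1 := Matrix.mem_unitaryGroup_iff'.mp hM.eigenvectorUnitary.2
  have key : M * M = U * (D * D) * star U := by
    rw [hsp]
    calc U * D * star U * (U * D * star U) = U * D * (star U * U) * D * star U := by
          noncomm_ring
      _ = U * (D * D) * star U := by rw [hU]; noncomm_ring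
  rw [key, Matrix.trace_mul_cycle, hU, one_mul, hDdef, Matrix.diagonal_mul_diagonal,
    Matrix.trace_diagonal]
  exact Finset.sum_congr rfl fun i _ => by simp [sq]

lemma posSemidef_one_add_smul (M : Matrix ι ι ℂ) (hM : M.IsHermitian) (t : ℝ)
    (h : ∀ i, 0 ≤ 1 + t * hM.eigenvalues i) :
    ((1 : Matrix ι ι ℂ) + (t : ℂ) • M).PosSemidef := by
  set U : Matrix ι ι ℂ := (hM.eigenvectorUnitary : Matrix ι ι ℂ) with hUdef
  have hsp : M = U * Matrix.diagonal (RCLike.ofReal ∘ hM.eigenvalues) * star U := hM.spectral_theorem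
  have hU : U * star U = 1 := Matrix.mem_unitaryGroup_iff.mp hM.eigenvectorUnitary.2
  have key : (1 : Matrix ι ι ℂ) + (t : ℂ) • M =
      U * Matrix.diagonal (fun i => ((1 + t * hM.eigenvalues i : ℝ) : ℂ)) * star U := by
    have h1 : (1 : Matrix ι ι ℂ) = U * 1 * star U := by rw [mul_one, hU]
    have hdiag : Matrix.diagonal (fun i => ((1 + t * hM.eigenvalues i : ℝ) : ℂ)) =
        1 + (t : ℂ) • Matrix.diagonal (RCLike.ofReal ∘ hM.eigenvalues) := by
      rw [← Matrix.diagonal_one, ← Matrix.diagonal_smul, Matrix.diagonal_add]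
      refine congrArg Matrix.diagonal (funext fun i => ?_)
      simp only [Pi.add_apply, Pi.smul_apply, Function.comp_apply, Pi.one_apply,
        Complex.real_smul, smul_eq_mul, Complex.coe_algebraMap]
      push_cast
      rfl
    rw [hdiag, mul_add, add_mul, ← h1, Matrix.mul_smul, Matrix.smul_mul, ← hsp]
  rw [key]
  have hd : (Matrix.diagonal (fun i => ((1 + t * hM.eigenvalues i : ℝ) : ℂ))).PosSemidef := by
    refine Matrix.PosSemidef.diagonal (fun i => ?_)
    show (0:ℂ) ≤ _
    exact Complex.zero_le_real.mpr (h i)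
  have := hd.mul_mul_conjTranspose_same U
  rwa [← Matrix.star_eq_conjTranspose] at this

lemma eigen_sq_le (f : ι → ℝ) (B : ℝ) (h0 : ∑ i, f i = 0)
    (h2 : ∑ i, (f i)^2 ≤ (Fintype.card ι : ℝ) * B) (j : ι) :
    (f j)^2 ≤ ((Fintype.card ι : ℝ) - 1) * B := by
  have hj : j ∈ Finset.univ := Finset.mem_univ j
  have hsplit : f j + ∑ i ∈ Finset.univ.erase j, f i = ∑ i, f i :=
    Finset.add_sum_erase _ f hj
  have hsplit2 : (f j)^2 + ∑ i ∈ Finset.univ.erase j, (f i)^2 = ∑ i, (f i)^2 :=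
    Finset.add_sum_erase _ (fun i => (f i)^2) hj
  have hcs : (∑ i ∈ Finset.univ.erase j, f i)^2 ≤
      (Finset.univ.erase j).card * ∑ i ∈ Finset.univ.erase j, (f i)^2 :=
    sq_sum_le_card_mul_sum_sq
  have hcard : ((Finset.univ.erase j).card : ℝ) = (Fintype.card ι : ℝ) - 1 := by
    rw [Finset.card_erase_of_mem hj, Finset.card_univ]
    have : 1 ≤ Fintype.card ι := Fintype.card_pos_iff.mpr ⟨j⟩
    push_cast [Nat.cast_sub this]; ring
  have hd1 : (1 : ℝ) ≤ (Fintype.card ι : ℝ) := by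
    exact_mod_cast Fintype.card_pos_iff.mpr ⟨j⟩
  rw [hcard] at hcs
  have hfj : ∑ i ∈ Finset.univ.erase j, f i = - f j := by linarith [hsplit, h0]
  rw [hfj] at hcs
  nlinarith [hcs, hsplit2, h2, sq_nonneg (f j)]

lemma posSemidef_smul_one_add_smul' {ι : Type*} [Fintype ι] [DecidableEq ι]
    (M : Matrix ι ι ℂ) (hM : M.IsHermitian) (c t : ℝ) (hc : 0 ≤ c)
    (h : ∀ i, 0 ≤ 1 + t * hM.eigenvalues i) :
    ((c : ℂ) • ((1 : Matrix ι ι ℂ) + (t : ℂ) • M)).PosSemidef := by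
  set U : Matrix ι ι ℂ := (hM.eigenvectorUnitary : Matrix ι ι ℂ) with hUdef
  have hU : U * star U = 1 := Matrix.mem_unitaryGroup_iff.mp hM.eigenvectorUnitary.2
  have key : (1 : Matrix ι ι ℂ) + (t : ℂ) • M =
      U * Matrix.diagonal (fun i => ((1 + t * hM.eigenvalues i : ℝ) : ℂ)) * star U := by
    have h1 : (1 : Matrix ι ι ℂ) = U * 1 * star U := by rw [mul_one, hU]
    have hdiag : Matrix.diagonal (fun i => ((1 + t * hM.eigenvalues i : ℝ) : ℂ)) =
        1 + (t : ℂ) • Matrix.diagonal (RCLike.ofReal ∘ hM.eigenvalues) := by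
      rw [← Matrix.diagonal_one, ← Matrix.diagonal_smul, Matrix.diagonal_add]
      refine congrArg Matrix.diagonal (funext fun i => ?_)
      simp only [Pi.add_apply, Pi.smul_apply, Function.comp_apply, Pi.one_apply,
        Complex.real_smul, smul_eq_mul, Complex.coe_algebraMap]
      push_cast
      rfl
    rw [hdiag, mul_add, add_mul, ← h1, Matrix.mul_smul, Matrix.smul_mul,
      ← (show M = U * Matrix.diagonal (RCLike.ofReal ∘ hM.eigenvalues) * star U from hM.spectral_theorem)]
  have hdc : (c : ℂ) • Matrix.diagonal (fun i => ((1 + t * hM.eigenvalues i : ℝ) : ℂ)) =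
      Matrix.diagonal (fun i => ((c * (1 + t * hM.eigenvalues i) : ℝ) : ℂ)) := by
    rw [← Matrix.diagonal_smul]
    refine congrArg Matrix.diagonal (funext fun i => ?_)
    simp only [Pi.smul_apply, smul_eq_mul]
    push_cast; ring
  have key2 : (c : ℂ) • ((1 : Matrix ι ι ℂ) + (t : ℂ) • M) =
      U * Matrix.diagonal (fun i => ((c * (1 + t * hM.eigenvalues i) : ℝ) : ℂ)) * star U := by
    rw [key, ← Matrix.smul_mul, ← Matrix.mul_smul, hdc]
  rw [key2]
  have hd : (Matrix.diagonal (fun i => ((c * (1 + t * hM.eigenvalues i) : ℝ) : ℂ))).PosSemidef := by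
    refine Matrix.PosSemidef.diagonal (fun i => ?_)
    show (0:ℂ) ≤ _
    exact Complex.zero_le_real.mpr (mul_nonneg hc (h i))
  have := hd.mul_mul_conjTranspose_same U
  rwa [← Matrix.star_eq_conjTranspose] at this

lemma half_one_add_psd {ι : Type*} [Fintype ι] [DecidableEq ι]
    (Q : Matrix ι ι ℂ) (hQ : Qᴴ = Q) (hQ2 : Q * Q = 1) :
    ((2:ℂ)⁻¹ • ((1 : Matrix ι ι ℂ) + Q)).PosSemidef := by
  set A : Matrix ι ι ℂ := (2:ℂ)⁻¹ • (1 + Q) with hA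
  have hherm : Aᴴ = A := by
    rw [hA, Matrix.conjTranspose_smul, Matrix.conjTranspose_add, Matrix.conjTranspose_one, hQ]
    norm_num
  have hsq : (1 + Q) * (1 + Q) = (2:ℂ) • (1 + Q) := by
    rw [two_smul, mul_add, add_mul, add_mul, one_mul, mul_one, one_mul, hQ2]
    abel
  have hidem : A * A = A := by
    rw [hA, Matrix.smul_mul, Matrix.mul_smul, hsq, smul_smul, smul_smul]
    norm_num
  have := Matrix.posSemidef_conjTranspose_mul_self A
  rwa [hherm, hidem] at this

lemma trace_submatrix_equiv' {α ι κ : Type*} [Fintype ι] [Fintype κ] [AddCommMonoid α]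
    (A : Matrix ι ι α) (e : κ ≃ ι) : (A.submatrix e e).trace = A.trace := by
  rw [Matrix.trace, Matrix.trace]
  exact Fintype.sum_equiv e _ _ fun i => rfl

def S (n : ℕ) : Finset (V n × V n) := Finset.univ.erase 0

lemma mem_S_iff {p : V n × V n} : p ∈ S n ↔ ¬(p.1 = 0 ∧ p.2 = 0) := by
  rw [S, Finset.mem_erase]
  constructor
  · rintro ⟨h, -⟩ ⟨h1, h2⟩; exact h (Prod.ext h1 h2)
  · intro h; exact ⟨fun hc => h ⟨congrArg Prod.fst hc, congrArg Prod.snd hc⟩, Finset.mem_univ _⟩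

lemma card_S : (S n).card = 2 ^ (2 * n) - 1 := by
  rw [S, Finset.card_erase_of_mem (Finset.mem_univ _), Finset.card_univ, Fintype.card_prod,
    card_V, ← pow_add, ← two_mul]

noncomputable def Mmat (s : V n × V n → ℂ) : Matrix (V n) (V n) ℂ := ∑ p ∈ S n, s p • P p.1 p.2

lemma Mmat_herm {s : V n × V n → ℂ} (hs : ∀ p ∈ S n, s p = 1 ∨ s p = -1) :
    (Mmat s).IsHermitian := by
  show (Mmat s)ᴴ = Mmat s
  rw [Mmat, Matrix.conjTranspose_sum]
  refine Finset.sum_congr rfl fun p hp => ?_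
  rw [Matrix.conjTranspose_smul, P_herm]
  rcases hs p hp with h | h <;> rw [h] <;> norm_num

lemma trace_Mmat (s : V n × V n → ℂ) : (Mmat s).trace = 0 := by
  rw [Mmat, Matrix.trace_sum]
  refine Finset.sum_eq_zero fun p hp => ?_
  rw [Matrix.trace_smul, trace_P (mem_S_iff.mp hp), smul_zero]

lemma trace_P_mul_Mmat {q : V n × V n} (hq : q ∈ S n) (s : V n × V n → ℂ) :
    (P q.1 q.2 * Mmat s).trace = s q * 2 ^ n := by
  rw [Mmat, Finset.mul_sum, Matrix.trace_sum]
  have : ∀ p ∈ S n, (P q.1 q.2 * (s p • P p.1 p.2)).trace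
      = if q = p then s p * 2 ^ n else 0 := by
    intro p hp
    rw [Matrix.mul_smul, Matrix.trace_smul, trace_P_mul, smul_eq_mul]
    by_cases h : q = p
    · rw [if_pos ⟨congrArg Prod.fst h, congrArg Prod.snd h⟩, if_pos h]
    · rw [if_neg (fun hc => h (Prod.ext hc.1 hc.2)), if_neg h, mul_zero]
  rw [Finset.sum_congr rfl this, Finset.sum_ite_eq, if_pos hq]

lemma trace_Mmat_mul_Mmat {s : V n × V n → ℂ} (hs : ∀ p ∈ S n, s p = 1 ∨ s p = -1) :
    (Mmat s * Mmat s).trace = ((S n).card : ℂ) * 2 ^ n := by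
  nth_rewrite 1 [Mmat]
  rw [Finset.sum_mul, Matrix.trace_sum]
  have : ∀ q ∈ S n, ((s q • P q.1 q.2) * Mmat s).trace = 2 ^ n := by
    intro q hq
    rw [Matrix.smul_mul, Matrix.trace_smul, trace_P_mul_Mmat hq, smul_eq_mul, ← mul_assoc]
    rcases hs q hq with h | h <;> rw [h] <;> norm_num
  rw [Finset.sum_congr rfl this, Finset.sum_const, nsmul_eq_mul]

end QracAux

open QracAux in
/-- Theorem 4: for every n ≥ 1 there exists a (2^{2n}−1, n, p)-QRAC with
success probability p ≥ 1/2 + 1/(2√((2^n−1)(2^{2n}−1))). -/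
theorem qrac_success_probability (n : ℕ) (hn : 1 ≤ n) :
    ∃ (ρ : (Fin (2 ^ (2 * n) - 1) → Bool) → Matrix (Fin (2 ^ n)) (Fin (2 ^ n)) ℂ)
      (E : Fin (2 ^ (2 * n) - 1) → Matrix (Fin (2 ^ n)) (Fin (2 ^ n)) ℂ),
      (∀ x, (ρ x).PosSemidef ∧ (ρ x).trace = 1) ∧
      (∀ i, (E i).PosSemidef ∧
        ((1 : Matrix (Fin (2 ^ n)) (Fin (2 ^ n)) ℂ) - E i).PosSemidef) ∧
      (∀ x i, (if x i then (E i * ρ x).trace.re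
               else 1 - (E i * ρ x).trace.re) ≥
        1 / 2 + 1 / (2 * Real.sqrt (((2 : ℝ) ^ n - 1) * ((2 : ℝ) ^ (2 * n) - 1)))) := by
  classical
  -- basic numerology
  have h2n : (1:ℕ) ≤ 2 ^ n := Nat.one_le_two_pow
  have h22n : (1:ℕ) ≤ 2 ^ (2 * n) := Nat.one_le_two_pow
  have hd2 : (2:ℝ) ≤ (2:ℝ) ^ n := by
    calc (2:ℝ) = 2 ^ 1 := (pow_one 2).symm
    _ ≤ 2 ^ n := pow_le_pow_right₀ (by norm_num) hn
  have hdd : (4:ℝ) ≤ (2:ℝ) ^ (2 * n) := by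
    calc (4:ℝ) = 2 ^ (2 * 1) := by norm_num
    _ ≤ 2 ^ (2 * n) := pow_le_pow_right₀ (by norm_num) (by omega)
  set B : ℝ := ((2:ℝ) ^ n - 1) * ((2:ℝ) ^ (2 * n) - 1) with hBdef
  have hBpos : 0 < B := mul_pos (by linarith) (by linarith)
  have hsB : 0 < Real.sqrt B := Real.sqrt_pos.mpr hBpos
  set t : ℝ := 1 / Real.sqrt B with htdef
  have htpos : 0 < t := by positivity
  -- index equivalences
  have hcardV : Fintype.card (V n) = 2 ^ n := card_V
  let fV : Fin (2 ^ n) ≃ V n := (Fintype.equivFinOfCardEq hcardV).symm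
  let eI : Fin (2 ^ (2 * n) - 1) ≃ {p // p ∈ S n} :=
    (Finset.equivFinOfCardEq (card_S (n := n))).symm
  -- sign functions
  set m := 2 ^ (2 * n) - 1 with hmdef
  let sg : (Fin m → Bool) → (V n × V n) → ℂ := fun x p =>
    if h : p ∈ S n then (if x (eI.symm ⟨p, h⟩) then 1 else -1) else 1
  have hsg : ∀ x, ∀ p ∈ S n, sg x p = 1 ∨ sg x p = -1 := by
    intro x p hp
    simp only [sg, dif_pos hp]
    by_cases h : x (eI.symm ⟨p, hp⟩) <;> simp [h]
  have hsgval : ∀ x i, sg x (eI i).1 = if x i then 1 else -1 := by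
    intro x i
    simp only [sg, dif_pos (eI i).2]
    congr 1
    rw [Subtype.coe_eta, Equiv.symm_apply_apply]
  -- the matrices over V n
  let Mx : (Fin m → Bool) → Matrix (V n) (V n) ℂ := fun x => Mmat (sg x)
  have hherm : ∀ x, (Mx x).IsHermitian := fun x => Mmat_herm (hsg x)
  let ρ' : (Fin m → Bool) → Matrix (V n) (V n) ℂ :=
    fun x => ((((2:ℝ) ^ n)⁻¹ : ℝ) : ℂ) • (1 + (t : ℂ) • Mx x)
  let E' : {p // p ∈ S n} → Matrix (V n) (V n) ℂ :=
    fun q => (2:ℂ)⁻¹ • (1 + P q.1.1 q.1.2)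
  refine ⟨fun x => (ρ' x).submatrix fV fV, fun i => (E' (eI i)).submatrix fV fV, ?_, ?_, ?_⟩
  · -- states: psd and trace 1
    intro x
    constructor
    · refine Matrix.PosSemidef.submatrix ?_ fV
      refine posSemidef_smul_one_add_smul' (Mx x) (hherm x) _ t (by positivity) ?_
      -- eigenvalue bounds
      intro i
      set lam := (hherm x).eigenvalues with hlam
      have hsum0 : ∑ j, lam j = 0 := by
        have h1 := trace_eq_sum_eigen (Mx x) (hherm x)
        rw [trace_Mmat] at h1
        have : ((∑ j, lam j : ℝ) : ℂ) = 0 := by push_cast; rw [← h1]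
        exact_mod_cast this
      have hsum2 : ∑ j, (lam j) ^ 2 = ((S n).card : ℝ) * 2 ^ n := by
        have h1 := trace_sq_eq_sum_eigen_sq (Mx x) (hherm x)
        rw [trace_Mmat_mul_Mmat (hsg x)] at h1
        have : ((∑ j, (lam j) ^ 2 : ℝ) : ℂ) = (((S n).card : ℝ) * 2 ^ n : ℝ) := by
          push_cast; rw [← h1]
        exact_mod_cast this
      have hcardS : ((S n).card : ℝ) = (2:ℝ) ^ (2 * n) - 1 := by
        rw [card_S, Nat.cast_sub h22n]
        push_cast; ring
      have hsq : (lam i) ^ 2 ≤ ((Fintype.card (V n) : ℝ) - 1) * ((2:ℝ) ^ (2 * n) - 1) := by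
        refine eigen_sq_le lam ((2:ℝ) ^ (2 * n) - 1) hsum0 ?_ i
        rw [hsum2, hcardS, hcardV]
        push_cast; ring_nf; exact le_refl _
      have hsq' : (lam i) ^ 2 ≤ B := by
        rw [hcardV] at hsq
        have hc : ((2 ^ n : ℕ) : ℝ) = (2:ℝ) ^ n := by push_cast; ring
        rw [hc] at hsq
        exact hsq
      have habs : |lam i| ≤ Real.sqrt B := by
        rw [← Real.sqrt_sq_eq_abs]
        exact Real.sqrt_le_sqrt hsq'
      have hlow : -Real.sqrt B ≤ lam i := (abs_le.mp habs).1
      have htsB : t * Real.sqrt B = 1 := by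
        rw [htdef]; field_simp
      have h1 : t * (-(Real.sqrt B)) ≤ t * lam i :=
        mul_le_mul_of_nonneg_left hlow (le_of_lt htpos)
      nlinarith [h1, htsB]
    · rw [trace_submatrix_equiv']
      show (((((2:ℝ) ^ n)⁻¹ : ℝ) : ℂ) • ((1 : Matrix (V n) (V n) ℂ) + (t : ℂ) • Mx x)).trace = 1
      rw [Matrix.trace_smul, Matrix.trace_add, Matrix.trace_smul, Matrix.trace_one, trace_Mmat,
        smul_zero, add_zero, smul_eq_mul, hcardV]
      push_cast
      rw [inv_mul_cancel₀ (by positivity)]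
  · -- measurements: E and 1 - E psd
    intro i
    constructor
    · exact Matrix.PosSemidef.submatrix
        (half_one_add_psd _ (P_herm _ _) (P_mul_self _ _)) fV
    · have h1 : (1 : Matrix (Fin (2 ^ n)) (Fin (2 ^ n)) ℂ) - (E' (eI i)).submatrix fV fV
          = ((1 : Matrix (V n) (V n) ℂ) - E' (eI i)).submatrix fV fV := by
        ext a b
        simp [Matrix.sub_apply, Matrix.one_apply, Equiv.apply_eq_iff_eq]
      rw [h1]
      refine Matrix.PosSemidef.submatrix ?_ fV
      have hEq : (1 : Matrix (V n) (V n) ℂ) - E' (eI i)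
          = (2:ℂ)⁻¹ • (1 + (-(P (eI i).1.1 (eI i).1.2))) := by
        show (1 : Matrix (V n) (V n) ℂ) - (2:ℂ)⁻¹ • (1 + P (eI i).1.1 (eI i).1.2) = _
        module
      rw [hEq]
      refine half_one_add_psd _ ?_ ?_
      · rw [Matrix.conjTranspose_neg, P_herm]
      · rw [neg_mul_neg, P_mul_self]
  · -- success probability
    intro x i
    rw [Matrix.submatrix_mul_equiv, trace_submatrix_equiv']
    set q := eI i with hqdef
    have hPM : (P q.1.1 q.1.2 * Mx x).trace = sg x q.1 * 2 ^ n := trace_P_mul_Mmat q.2 _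
    have hsgq : sg x q.1 = ((if x i then (1:ℝ) else -1 : ℝ) : ℂ) := by
      rw [hqdef, hsgval]
      by_cases hx : x i <;> simp [hx]
    have htr : (E' q * ρ' x).trace
        = ((1/2 + t * (if x i then (1:ℝ) else -1) / 2 : ℝ) : ℂ) := by
      have hexp : E' q * ρ' x = ((2:ℂ)⁻¹ * ((((2:ℝ) ^ n)⁻¹ : ℝ) : ℂ)) •
          ((1 + P q.1.1 q.1.2) * (1 + (t:ℂ) • Mx x)) := by
        show ((2:ℂ)⁻¹ • (1 + P q.1.1 q.1.2)) * (((((2:ℝ) ^ n)⁻¹ : ℝ) : ℂ) • (1 + (t:ℂ) • Mx x)) = _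
        rw [Matrix.smul_mul, Matrix.mul_smul, smul_smul]
      have hprod : (1 + P q.1.1 q.1.2) * (1 + (t:ℂ) • Mx x)
          = 1 + (t:ℂ) • Mx x + P q.1.1 q.1.2 + (t:ℂ) • (P q.1.1 q.1.2 * Mx x) := by
        simp only [mul_add, add_mul, one_mul, mul_one, Matrix.mul_smul]
        abel
      rw [hexp, hprod, Matrix.trace_smul, Matrix.trace_add, Matrix.trace_add, Matrix.trace_add,
        Matrix.trace_smul, Matrix.trace_smul, Matrix.trace_one, trace_Mmat, trace_P
          (mem_S_iff.mp q.2), hPM, hcardV, hsgq]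
      rw [smul_zero, add_zero, smul_eq_mul, smul_eq_mul]
      by_cases hx : x i <;> simp only [hx, if_true, if_false] <;> push_cast <;>
        field_simp <;> ring
    rw [htr, Complex.ofReal_re]
    have ht2 : t / 2 = 1 / (2 * Real.sqrt B) := by
      rw [htdef]; field_simp
    by_cases hx : x i
    · rw [if_pos hx, if_pos hx]
      rw [ge_iff_le]
      linarith [ht2]
    · rw [if_neg hx, if_neg hx]
      rw [ge_iff_le]
      linarith [ht2]
end

section
/- For every n ≥ 2 there exists a (2^n−1, n, p)-RAC with p ≥ 1/2 + 1/(2·(2^{n+1}−5)): that is, setting m = 2^n−1, there exist, for each x ∈ {0,1}^m, a probability distribution e_x over the 2^n messages s ∈ {0,1}^n, and decoding functions D_i : {0,1}^n → [0,1] for i ∈ {1,…,m}, such that for every x ∈ {0,1}^m and every i ∈ {1,…,m} the success probability Σ_s e_x(s)·(D_i(s) if x_i = 1, else 1 − D_i(s)) is at least 1/2 + 1/(2·(2^{n+1}−5)). -/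
open BigOperators

open Finset

noncomputable def chi {n : ℕ} (w : Fin n → Bool) (s : Fin n → Bool) : ℝ :=
  ∏ k, (if w k && s k then (-1 : ℝ) else 1)

lemma abs_chi {n : ℕ} (w s : Fin n → Bool) : |chi w s| = 1 := by
  rw [chi, Finset.abs_prod]
  apply Finset.prod_eq_one
  intro k _
  split_ifs <;> norm_num

lemma chi_mul {n : ℕ} (u w s : Fin n → Bool) :
    chi u s * chi w s = chi (fun k => xor (u k) (w k)) s := by
  rw [chi, chi, chi, ← Finset.prod_mul_distrib]
  apply Finset.prod_congr rfl
  intro k _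
  cases hu : u k <;> cases hw : w k <;> cases hs : s k <;> norm_num

lemma sum_chi {n : ℕ} (w : Fin n → Bool) (hw : ∃ k, w k = true) :
    ∑ s : Fin n → Bool, chi w s = 0 := by
  have h := Finset.prod_univ_sum (fun _ : Fin n => (Finset.univ : Finset Bool))
      (fun k b => (if w k && b then (-1 : ℝ) else 1))
  rw [Fintype.piFinset_univ] at h
  obtain ⟨k0, hk0⟩ := hw
  have : ∑ s : Fin n → Bool, chi w s
      = ∏ k : Fin n, ∑ b : Bool, (if w k && b then (-1 : ℝ) else 1) := by
    rw [h]; rfl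
  rw [this]
  apply Finset.prod_eq_zero (Finset.mem_univ k0)
  simp [hk0]

lemma sum_chi_self {n : ℕ} (w : Fin n → Bool) :
    ∑ s : Fin n → Bool, chi w s * chi w s = 2 ^ n := by
  have : ∀ s : Fin n → Bool, chi w s * chi w s = 1 := by
    intro s
    have h := abs_chi w s; nlinarith [abs_chi w s, abs_nonneg (chi w s), sq_abs (chi w s)]
  rw [Finset.sum_congr rfl fun s _ => this s]
  simp [Finset.card_univ]

def vb (n : ℕ) (i : Fin (2 ^ n - 1)) : Fin n → Bool := fun k => (i.val + 1).testBit k.val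

lemma vb_ne_zero (n : ℕ) (i : Fin (2 ^ n - 1)) : ∃ k, vb n i k = true := by
  by_contra h
  push_neg at h
  have hlt : i.val + 1 < 2 ^ n := by
    have := i.isLt
    have h1 : 1 ≤ 2 ^ n := Nat.one_le_two_pow
    omega
  have : i.val + 1 = 0 := by
    apply Nat.eq_of_testBit_eq
    intro j
    simp only [Nat.zero_testBit]
    by_cases hj : j < n
    · have := h ⟨j, hj⟩
      simpa [vb] using this
    · apply Nat.testBit_eq_false_of_lt
      exact lt_of_lt_of_le hlt (Nat.pow_le_pow_right (by norm_num) (by omega))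
  omega

lemma vb_inj (n : ℕ) {i j : Fin (2 ^ n - 1)} (hij : i ≠ j) :
    ∃ k, xor (vb n i k) (vb n j k) = true := by
  by_contra h
  push_neg at h
  apply hij
  have hi : i.val + 1 < 2 ^ n := by
    have := i.isLt; have h1 : 1 ≤ 2 ^ n := Nat.one_le_two_pow; omega
  have hj : j.val + 1 < 2 ^ n := by
    have := j.isLt; have h1 : 1 ≤ 2 ^ n := Nat.one_le_two_pow; omega
  have : i.val + 1 = j.val + 1 := by
    apply Nat.eq_of_testBit_eq
    intro k
    by_cases hk : k < n
    · have := h ⟨k, hk⟩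
      simp only [vb] at this
      cases hti : (i.val + 1).testBit k <;> cases htj : (j.val + 1).testBit k <;>
        simp [vb, hti, htj] at this ⊢
    · rw [Nat.testBit_eq_false_of_lt, Nat.testBit_eq_false_of_lt]
      · exact lt_of_lt_of_le hj (Nat.pow_le_pow_right (by norm_num) (by omega))
      · exact lt_of_lt_of_le hi (Nat.pow_le_pow_right (by norm_num) (by omega))
  exact Fin.ext (by omega)

lemma sum_chi_mul (n : ℕ) (i j : Fin (2 ^ n - 1)) :
    ∑ s : Fin n → Bool, chi (vb n i) s * chi (vb n j) s
      = if i = j then (2 : ℝ) ^ n else 0 := by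
  by_cases hij : i = j
  · subst hij; simp [sum_chi_self]
  · simp only [hij, if_false]
    rw [Finset.sum_congr rfl fun s _ => chi_mul (vb n i) (vb n j) s]
    exact sum_chi _ (vb_inj n hij)

/-- Theorem 5: for every n ≥ 2 there exists a (2^n−1, n, p)-RAC with success
probability p ≥ 1/2 + 1/(2(2^{n+1}−5)). -/
theorem rac_success_probability (n : ℕ) (hn : 2 ≤ n) :
    ∃ (e : (Fin (2 ^ n - 1) → Bool) → (Fin n → Bool) → ℝ)
      (D : Fin (2 ^ n - 1) → (Fin n → Bool) → ℝ),
      (∀ x s, 0 ≤ e x s) ∧ (∀ x, ∑ s, e x s = 1) ∧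
      (∀ i s, 0 ≤ D i s ∧ D i s ≤ 1) ∧
      (∀ x i, (∑ s, e x s * (if x i then D i s else 1 - D i s)) ≥
        1 / 2 + 1 / (2 * ((2 : ℝ) ^ (n + 1) - 5))) := by
  have h4 : (4 : ℝ) ≤ 2 ^ n := by
    calc (4 : ℝ) = 2 ^ 2 := by norm_num
    _ ≤ 2 ^ n := by exact pow_le_pow_right₀ (by norm_num) hn
  set M : ℝ := 2 ^ n - 1 with hM
  have hM3 : (3 : ℝ) ≤ M := by rw [hM]; linarith
  have hMpos : (0 : ℝ) < M := by linarith
  have h2n : (0 : ℝ) < 2 ^ n := by positivity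
  have hcardFn : (Finset.univ : Finset (Fin n → Bool)).card = 2 ^ n := by
    simp [Finset.card_univ]
  have hcardM : ((Finset.univ : Finset (Fin (2 ^ n - 1))).card : ℝ) = M := by
    rw [Finset.card_univ, Fintype.card_fin]
    rw [hM]
    push_cast [Nat.one_le_two_pow]
    ring
  refine ⟨fun x s => (1 + (1 / M) * ∑ j, ((if x j then (1 : ℝ) else -1) * chi (vb n j) s)) / 2 ^ n,
          fun i s => (1 + chi (vb n i) s) / 2, ?_, ?_, ?_, ?_⟩
  · -- nonnegativity of e
    intro x s
    dsimp only
    have hterm : ∀ j : Fin (2 ^ n - 1), (-1 : ℝ) ≤ (if x j then (1 : ℝ) else -1) * chi (vb n j) s := by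
      intro j
      have h1 : |(if x j then (1 : ℝ) else -1) * chi (vb n j) s| = 1 := by
        rw [abs_mul, abs_chi]
        split_ifs <;> norm_num
      nlinarith [abs_nonneg ((if x j then (1 : ℝ) else -1) * chi (vb n j) s),
        neg_abs_le ((if x j then (1 : ℝ) else -1) * chi (vb n j) s)]
    have hS : -M ≤ ∑ j, (if x j then (1 : ℝ) else -1) * chi (vb n j) s := by
      have := Finset.sum_le_sum (fun j (_ : j ∈ Finset.univ) => hterm j)
      have hconst : ∑ _j : Fin (2 ^ n - 1), (-1 : ℝ) = -M := by
        rw [Finset.sum_const, nsmul_eq_mul, hcardM]; ring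
      linarith [hconst ▸ this]
    have : (0 : ℝ) ≤ 1 + (1 / M) * ∑ j, (if x j then (1 : ℝ) else -1) * chi (vb n j) s := by
      have h1 : (1 / M) * (-M) ≤ (1 / M) * ∑ j, (if x j then (1 : ℝ) else -1) * chi (vb n j) s := by
        apply mul_le_mul_of_nonneg_left hS (by positivity)
      have h2 : (1 / M) * (-M) = -1 := by field_simp
      linarith
    positivity
  · -- e sums to 1
    intro x
    dsimp only
    rw [← Finset.sum_div, div_eq_one_iff_eq (ne_of_gt h2n)]
    rw [Finset.sum_add_distrib]
    have h1 : ∑ _s : Fin n → Bool, (1 : ℝ) = 2 ^ n := by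
      rw [Finset.sum_const, hcardFn, nsmul_eq_mul]; push_cast; ring
    have h2 : ∑ s : Fin n → Bool,
        (1 / M) * ∑ j, (if x j then (1 : ℝ) else -1) * chi (vb n j) s = 0 := by
      rw [← Finset.mul_sum]
      rw [Finset.sum_comm]
      rw [Finset.sum_eq_zero, mul_zero]
      intro j _
      rw [← Finset.mul_sum, sum_chi _ (vb_ne_zero n j), mul_zero]
    rw [h1, h2, add_zero]
  · -- D bounds
    intro i s
    have h := abs_chi (vb n i) s
    have h2 := abs_le.mp h.le
    constructor <;> [linarith [h2.1]; linarith [h2.2]]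
  · -- success probability
    intro x i
    dsimp only
    set y : Fin (2 ^ n - 1) → ℝ := fun j => if x j then (1 : ℝ) else -1 with hy
    have hyi : y i * y i = 1 := by
      simp only [hy]; split_ifs <;> norm_num
    have hcross : ∑ s : Fin n → Bool,
        (∑ j, y j * chi (vb n j) s) * chi (vb n i) s = y i * 2 ^ n := by
      calc ∑ s : Fin n → Bool, (∑ j, y j * chi (vb n j) s) * chi (vb n i) s
          = ∑ s : Fin n → Bool, ∑ j, (y j * chi (vb n j) s) * chi (vb n i) s := by
            refine Finset.sum_congr rfl fun s _ => ?_
            rw [Finset.sum_mul]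
        _ = ∑ j, ∑ s : Fin n → Bool, (y j * chi (vb n j) s) * chi (vb n i) s :=
            Finset.sum_comm
        _ = ∑ j, y j * (if j = i then (2 : ℝ) ^ n else 0) := by
            refine Finset.sum_congr rfl fun j _ => ?_
            calc ∑ s : Fin n → Bool, (y j * chi (vb n j) s) * chi (vb n i) s
                = ∑ s : Fin n → Bool, y j * (chi (vb n j) s * chi (vb n i) s) := by
                  refine Finset.sum_congr rfl fun s _ => by ring
              _ = y j * ∑ s : Fin n → Bool, chi (vb n j) s * chi (vb n i) s :=
                  (Finset.mul_sum _ _ _).symm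
              _ = y j * (if j = i then (2 : ℝ) ^ n else 0) := by rw [sum_chi_mul]
        _ = y i * 2 ^ n := by
            simp only [mul_ite, mul_zero]
            rw [Finset.sum_ite_eq' Finset.univ i (fun j => y j * 2 ^ n)]
            simp
    have hform : ∀ s : Fin n → Bool,
        (1 + 1 / M * ∑ j, y j * chi (vb n j) s) / 2 ^ n *
          (if x i then (1 + chi (vb n i) s) / 2 else 1 - (1 + chi (vb n i) s) / 2)
        = ((1 : ℝ) + (1 / M * ∑ j, y j * chi (vb n j) s
            + (y i * chi (vb n i) s
              + 1 / M * (y i * ((∑ j, y j * chi (vb n j) s) * chi (vb n i) s))))) / (2 ^ n * 2) := by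
      intro s
      by_cases hxi : x i <;> simp only [hy, hxi, if_true, if_false, Bool.false_eq_true] <;> field_simp <;> ring
    have hone : ∑ _s : Fin n → Bool, (1 : ℝ) = 2 ^ n := by
      rw [Finset.sum_const, hcardFn, nsmul_eq_mul]; push_cast; ring
    have hS0 : ∑ s : Fin n → Bool, 1 / M * ∑ j, y j * chi (vb n j) s = 0 := by
      rw [← Finset.mul_sum, Finset.sum_comm]
      rw [Finset.sum_eq_zero, mul_zero]
      intro j _
      rw [← Finset.mul_sum, sum_chi _ (vb_ne_zero n j), mul_zero]
    have hchi0 : ∑ s : Fin n → Bool, y i * chi (vb n i) s = 0 := by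
      rw [← Finset.mul_sum, sum_chi _ (vb_ne_zero n i), mul_zero]
    have hlast : ∑ s : Fin n → Bool,
        1 / M * (y i * ((∑ j, y j * chi (vb n j) s) * chi (vb n i) s)) = 2 ^ n / M := by
      rw [← Finset.mul_sum, ← Finset.mul_sum, hcross]
      rw [← mul_assoc (y i)]
      rw [hyi]
      field_simp
    have hval : ∑ s : Fin n → Bool,
        (1 + 1 / M * ∑ j, y j * chi (vb n j) s) / 2 ^ n *
          (if x i then (1 + chi (vb n i) s) / 2 else 1 - (1 + chi (vb n i) s) / 2)
        = 1 / 2 + 1 / (2 * M) := by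
      rw [Finset.sum_congr rfl fun s _ => hform s]
      rw [← Finset.sum_div]
      rw [Finset.sum_add_distrib, Finset.sum_add_distrib, Finset.sum_add_distrib]
      rw [hone, hS0, hchi0, hlast]
      field_simp
      ring
    rw [hval]
    have hKpos : (0 : ℝ) < 2 ^ (n + 1) - 5 := by
      rw [pow_succ]; linarith
    have hMK : 2 * M ≤ 2 * ((2 : ℝ) ^ (n + 1) - 5) := by
      rw [pow_succ, hM]; linarith
    have := one_div_le_one_div_of_le (by linarith : (0 : ℝ) < 2 * M) hMK
    linarith
end
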